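/- arXiv:2407.00712 — 14 statements merged into one kernel-verified Lean document; each statement's English description precedes it below -/
import Mathlib

section
/- Let r : [0,∞) → ℝ be continuous and strictly positive, and for t > 0 define the geometric mean failure rate G(t) = exp((1/t)∫₀ᵗ ln r(u) du) and the geometric aging intensity L^G(t) = r(t)/G(t). Then G is monotone non-decreasing (respectively non-increasing) on (0,∞) if and only if L^G(t) ≥ 1 (respectively L^G(t) ≤ 1) for all t > 0. -/
/-!
`log G` is the running mean `m t = (1/t) ∫₀ᵗ log r` of `log r`, and for `t > 0` it satisfies
`m' t = (log r t - m t) / t`. So `G` is non-decreasing iff `m ≤ log r`, i.e. `G ≤ r`, on `(0, ∞)`;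
the non-increasing case is symmetric.
-/

open Set

section DerivativeSign

variable {D : Set ℝ} {g g' : ℝ → ℝ}

theorem monotoneOn_iff_forall_deriv_nonneg_of_isOpen (hDo : IsOpen D) (hDc : Convex ℝ D)
    (hg : ∀ x ∈ D, HasDerivAt g (g' x) x) : MonotoneOn g D ↔ ∀ x ∈ D, 0 ≤ g' x := by
  refine ⟨fun hmono x hx => (hg x hx).hasDerivWithinAt.nonneg_of_monotoneOn
    (hDo.preperfect x hx) hmono, fun hnonneg => ?_⟩
  refine monotoneOn_of_deriv_nonneg hDc (fun x hx => (hg x hx).continuousAt.continuousWithinAt)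
    (fun x hx => ?_) (fun x hx => ?_) <;> rw [hDo.interior_eq] at hx
  · exact (hg x hx).differentiableAt.differentiableWithinAt
  · exact (hg x hx).deriv ▸ hnonneg x hx

theorem antitoneOn_iff_forall_deriv_nonpos_of_isOpen (hDo : IsOpen D) (hDc : Convex ℝ D)
    (hg : ∀ x ∈ D, HasDerivAt g (g' x) x) : AntitoneOn g D ↔ ∀ x ∈ D, g' x ≤ 0 := by
  refine ⟨fun hanti x hx => (hg x hx).hasDerivWithinAt.nonpos_of_antitoneOn
    (hDo.preperfect x hx) hanti, fun hnonpos => ?_⟩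
  refine antitoneOn_of_deriv_nonpos hDc (fun x hx => (hg x hx).continuousAt.continuousWithinAt)
    (fun x hx => ?_) (fun x hx => ?_) <;> rw [hDo.interior_eq] at hx
  · exact (hg x hx).differentiableAt.differentiableWithinAt
  · exact (hg x hx).deriv ▸ hnonpos x hx

end DerivativeSign

section RunningMean

noncomputable def runningMean (f : ℝ → ℝ) (t : ℝ) : ℝ :=
  (1 / t) * ∫ u in (0 : ℝ)..t, f u

variable {f : ℝ → ℝ} {t : ℝ}

theorem hasDerivAt_runningMean (hf : ContinuousOn f (Ici 0)) (ht : 0 < t) :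
    HasDerivAt (runningMean f) ((f t - runningMean f t) / t) t := by
  have hint : HasDerivAt (fun t => ∫ u in (0 : ℝ)..t, f u) (f t) t :=
    intervalIntegral.integral_hasDerivAt_right
      ((hf.mono fun x hx => (uIcc_of_le ht.le ▸ hx).1).intervalIntegrable)
      ((hf.mono (Ioi_subset_Ici le_rfl)).stronglyMeasurableAtFilter isOpen_Ioi t ht)
      (hf.continuousAt (Ici_mem_nhds ht))
  have hinv : HasDerivAt (fun t : ℝ => 1 / t) (-(1 / t ^ 2)) t := by
    simpa using hasDerivAt_inv ht.ne'
  refine (hinv.mul hint).congr_deriv ?_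
  rw [runningMean]
  field_simp
  ring

theorem monotoneOn_runningMean_iff (hf : ContinuousOn f (Ici 0)) :
    MonotoneOn (runningMean f) (Ioi 0) ↔ ∀ t > 0, runningMean f t ≤ f t := by
  rw [monotoneOn_iff_forall_deriv_nonneg_of_isOpen isOpen_Ioi (convex_Ioi 0)
    fun t ht => hasDerivAt_runningMean hf ht]
  refine forall₂_congr fun t ht => ?_
  rw [le_div_iff₀ ht, zero_mul, sub_nonneg]

theorem antitoneOn_runningMean_iff (hf : ContinuousOn f (Ici 0)) :
    AntitoneOn (runningMean f) (Ioi 0) ↔ ∀ t > 0, f t ≤ runningMean f t := by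
  rw [antitoneOn_iff_forall_deriv_nonpos_of_isOpen isOpen_Ioi (convex_Ioi 0)
    fun t ht => hasDerivAt_runningMean hf ht]
  refine forall₂_congr fun t ht => ?_
  rw [div_le_iff₀ ht, zero_mul, sub_nonpos]

end RunningMean

theorem monotoneOn_exp_comp_iff {g : ℝ → ℝ} {s : Set ℝ} :
    MonotoneOn (fun t => Real.exp (g t)) s ↔ MonotoneOn g s := by
  simp only [MonotoneOn, Real.exp_le_exp]

theorem antitoneOn_exp_comp_iff {g : ℝ → ℝ} {s : Set ℝ} :
    AntitoneOn (fun t => Real.exp (g t)) s ↔ AntitoneOn g s := by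
  simp only [AntitoneOn, Real.exp_le_exp]

theorem one_le_div_exp_iff {x y : ℝ} (hx : 0 < x) : 1 ≤ x / Real.exp y ↔ y ≤ Real.log x := by
  rw [one_le_div (Real.exp_pos y), Real.le_log_iff_exp_le hx]

theorem div_exp_le_one_iff {x y : ℝ} (hx : 0 < x) : x / Real.exp y ≤ 1 ↔ Real.log x ≤ y := by
  rw [div_le_one (Real.exp_pos y), Real.log_le_iff_le_exp hx]

theorem geometric_aging_intensity_characterization
    (r : ℝ → ℝ) (hc : ContinuousOn r (Set.Ici 0))
    (hpos : ∀ u ∈ Set.Ici (0 : ℝ), 0 < r u) :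
    (MonotoneOn (fun t => Real.exp ((1 / t) * ∫ u in (0:ℝ)..t, Real.log (r u)))
        (Set.Ioi 0) ↔
      ∀ t > (0:ℝ),
        (1:ℝ) ≤ r t / Real.exp ((1 / t) * ∫ u in (0:ℝ)..t, Real.log (r u))) ∧
    (AntitoneOn (fun t => Real.exp ((1 / t) * ∫ u in (0:ℝ)..t, Real.log (r u)))
        (Set.Ioi 0) ↔
      ∀ t > (0:ℝ),
        r t / Real.exp ((1 / t) * ∫ u in (0:ℝ)..t, Real.log (r u)) ≤ 1) := by
  have hlog : ContinuousOn (fun u => Real.log (r u)) (Ici 0) :=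
    hc.log fun u hu => (hpos u hu).ne'
  have hr : ∀ t > (0 : ℝ), 0 < r t := fun t ht => hpos t (le_of_lt ht)
  exact ⟨monotoneOn_exp_comp_iff.trans <| (monotoneOn_runningMean_iff hlog).trans <|
      forall₂_congr fun t ht => (one_le_div_exp_iff (hr t ht)).symm,
    antitoneOn_exp_comp_iff.trans <| (antitoneOn_runningMean_iff hlog).trans <|
      forall₂_congr fun t ht => (div_exp_le_one_iff (hr t ht)).symm⟩
end

section
/- Let r : [0,∞) → ℝ be continuous and strictly positive, and suppose the arithmetic mean failure rate A(t) = (1/t)∫₀ᵗ r(u) du is monotone non-decreasing on (0,∞) (the IFRA property). Then the geometric aging intensity satisfies L^G(t) ≥ 1 and the harmonic aging intensity satisfies L^H(t) ≥ 1 for all t > 0. -/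
open MeasureTheory Set Filter Real Topology
open scoped Interval

/-!
Since `A' = (r - A) / t`, the IFRA property (`A` non-decreasing) gives `A(t) ≤ r(t)`. The classical
chain `H ≤ G ≤ A` of means of `r` over `[0, t]` then gives `H(t) ≤ G(t) ≤ r(t)`: `G ≤ A` is Jensen's
inequality for `exp` applied to `log r`, and `H ≤ G` is the same inequality applied to `1 / r`.
-/

section Means

variable {α : Type*} [MeasurableSpace α] {μ : Measure α} [IsFiniteMeasure μ] [NeZero μ] {f : α → ℝ}

theorem exp_average_log_le_average (hf : ∀ᵐ x ∂μ, 0 < f x) (hfi : Integrable f μ)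
    (hlog : Integrable (fun x ↦ log (f x)) μ) :
    exp (⨍ x, log (f x) ∂μ) ≤ ⨍ x, f x ∂μ := by
  have hexp_log : (fun x ↦ exp (log (f x))) =ᵐ[μ] f := hf.mono fun x hx ↦ exp_log hx
  calc exp (⨍ x, log (f x) ∂μ) ≤ ⨍ x, exp (log (f x)) ∂μ :=
        convexOn_exp.map_average_le continuous_exp.continuousOn isClosed_univ
          (ae_of_all _ fun _ ↦ mem_univ _) hlog (hfi.congr hexp_log.symm)
    _ = ⨍ x, f x ∂μ := average_congr hexp_log

theorem inv_average_inv_le_exp_average_log (hf : ∀ᵐ x ∂μ, 0 < f x)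
    (hfi : Integrable (fun x ↦ (f x)⁻¹) μ) (hlog : Integrable (fun x ↦ log (f x)) μ) :
    (⨍ x, (f x)⁻¹ ∂μ)⁻¹ ≤ exp (⨍ x, log (f x) ∂μ) := by
  have h := exp_average_log_le_average (hf.mono fun _ ↦ inv_pos.2) hfi
    (by simp only [log_inv]; exact hlog.neg)
  simp only [log_inv, average_neg, exp_neg] at h
  exact inv_le_of_inv_le₀ (exp_pos _) h

end Means

theorem intervalAverage_le_of_monotoneOn {f : ℝ → ℝ} {a t : ℝ} (hat : a < t)
    (hfi : IntervalIntegrable f volume a t) (hmeas : StronglyMeasurableAtFilter f (𝓝 t))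
    (hft : ContinuousAt f t) (hmono : MonotoneOn (fun s ↦ ⨍ x in a..s, f x) (Ioi a)) :
    ⨍ x in a..t, f x ≤ f t := by
  have hta : 0 < t - a := sub_pos.2 hat
  simp only [interval_average_eq, smul_eq_mul] at hmono ⊢
  have hderiv := (((hasDerivAt_id t).sub_const a).inv hta.ne').mul
    (intervalIntegral.integral_hasDerivAt_right hfi hmeas hft)
  have h0 := hderiv.hasDerivWithinAt.nonneg_of_monotoneOn (isOpen_Ioi.preperfect t hat) hmono
  simp only [id, Pi.inv_apply] at h0
  have hscaled : (t - a) * (-1 / (t - a) ^ 2 * (∫ x in a..t, f x) + (t - a)⁻¹ * f t)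
      = f t - (t - a)⁻¹ * ∫ x in a..t, f x := by
    field_simp
    ring
  linarith [mul_nonneg hta.le h0]

theorem IFRA_implies_GAI_HAI_ge_one
    (r : ℝ → ℝ) (hc : ContinuousOn r (Set.Ici 0))
    (hpos : ∀ u ∈ Set.Ici (0 : ℝ), 0 < r u)
    (hIFRA : MonotoneOn (fun t => (1 / t) * ∫ u in (0:ℝ)..t, r u) (Set.Ioi 0)) :
    ∀ t > (0:ℝ),
      (1:ℝ) ≤ r t / Real.exp ((1 / t) * ∫ u in (0:ℝ)..t, Real.log (r u)) ∧
      (1:ℝ) ≤ r t / ((1 / t) * ∫ u in (0:ℝ)..t, (r u)⁻¹)⁻¹ := by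
  intro t ht
  have hmean : ∀ (g : ℝ → ℝ) (s : ℝ), (1 / s) * ∫ u in (0:ℝ)..s, g u = ⨍ u in 0..s, g u := by
    intro g s
    rw [interval_average_eq, sub_zero, smul_eq_mul, one_div]
  simp only [hmean] at hIFRA ⊢
  have hct : ContinuousOn r (Icc 0 t) := hc.mono Icc_subset_Ici_self
  have hne : ∀ u ∈ Icc 0 t, r u ≠ 0 := fun u hu ↦ (hpos u hu.1).ne'
  have hIoc : Ι 0 t = Ioc 0 t := uIoc_of_le ht.le
  have : NeZero (volume.restrict (Ι 0 t)) := ⟨by simp [hIoc, ht]⟩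
  have : IsFiniteMeasure (volume.restrict (Ι 0 t)) := by rw [hIoc]; infer_instance
  have hint : ∀ g : ℝ → ℝ, ContinuousOn g (Icc 0 t) → Integrable g (volume.restrict (Ι 0 t)) :=
    fun g hg ↦ hIoc ▸ hg.integrableOn_Icc.mono_set Ioc_subset_Icc_self
  have hr : ∀ᵐ u ∂volume.restrict (Ι 0 t), 0 < r u :=
    ae_restrict_of_forall_mem measurableSet_uIoc fun u hu ↦ hpos u (hIoc ▸ hu).1.le
  have hA_le_r := intervalAverage_le_of_monotoneOn ht (hct.intervalIntegrable_of_Icc ht.le)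
    ((hc.mono Ioi_subset_Ici_self).stronglyMeasurableAtFilter isOpen_Ioi t ht)
    (hc.continuousAt (Ici_mem_nhds ht)) hIFRA
  have hG_le_A := exp_average_log_le_average hr (hint r hct) (hint _ (hct.log hne))
  have hH_le_G :=
    inv_average_inv_le_exp_average_log hr (hint _ (hct.inv₀ hne)) (hint _ (hct.log hne))
  have hH_pos : 0 < (⨍ u in 0..t, (r u)⁻¹)⁻¹ := by
    rw [inv_pos, interval_average_eq]
    exact smul_pos (by simpa using ht) (intervalIntegral.intervalIntegral_pos_of_pos_on
      ((hct.inv₀ hne).intervalIntegrable_of_Icc ht.le) (fun u hu ↦ inv_pos.2 (hpos u hu.1.le)) ht)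
  exact ⟨(one_le_div (exp_pos _)).2 (hG_le_A.trans hA_le_r),
    (one_le_div hH_pos).2 ((hH_le_G.trans hG_le_A).trans hA_le_r)⟩
end

section
/- Let r : [0,∞) → ℝ be continuous and strictly positive, and suppose the harmonic mean failure rate H(t) = ((1/t)∫₀ᵗ (1/r(u)) du)⁻¹ is monotone non-increasing on (0,∞) (the DHFR property). Then the geometric aging intensity satisfies L^G(t) ≤ 1 for all t > 0. -/
lemma mono_deriv_nonneg {f : ℝ → ℝ} {t d : ℝ} (ht : 0 < t)
    (hm : MonotoneOn f (Set.Ioi 0)) (hd : HasDerivAt f d t) : 0 ≤ d := by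
  have h := hasDerivAt_iff_tendsto_slope.mp hd
  have h2 : Filter.Tendsto (slope f t) (nhdsWithin t (Set.Ioi t)) (nhds d) :=
    h.mono_left (nhdsWithin_mono _ (fun x hx => ne_of_gt hx))
  refine ge_of_tendsto h2 ?_
  filter_upwards [eventually_mem_nhdsWithin] with x hx
  rw [slope_def_field]
  have hxt : t < x := hx
  exact div_nonneg (sub_nonneg.2 (hm (Set.mem_Ioi.2 ht) (Set.mem_Ioi.2 (ht.trans hxt)) hxt.le))
    (sub_nonneg.2 hxt.le)

theorem DHFR_implies_GAI_le_one
    (r : ℝ → ℝ) (hc : ContinuousOn r (Set.Ici 0))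
    (hpos : ∀ u ∈ Set.Ici (0 : ℝ), 0 < r u)
    (hDHFR : AntitoneOn (fun t => ((1 / t) * ∫ u in (0:ℝ)..t, (r u)⁻¹)⁻¹) (Set.Ioi 0)) :
    ∀ t > (0:ℝ),
      r t / Real.exp ((1 / t) * ∫ u in (0:ℝ)..t, Real.log (r u)) ≤ 1 := by
  set F : ℝ → ℝ := fun t => ∫ u in (0:ℝ)..t, (r u)⁻¹ with hF
  have hinvc : ContinuousOn (fun u => (r u)⁻¹) (Set.Ici 0) :=
    hc.inv₀ (fun u hu => (hpos u hu).ne')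
  -- integrability of 1/r on [0,t]
  have hint : ∀ t, 0 < t → IntervalIntegrable (fun u => (r u)⁻¹) MeasureTheory.volume 0 t := by
    intro t ht
    exact (hinvc.mono (by rw [Set.uIcc_of_le ht.le]; exact Set.Icc_subset_Ici_self)).intervalIntegrable
  -- F is positive on Ioi 0
  have hFpos : ∀ t, 0 < t → 0 < F t := by
    intro t ht
    exact intervalIntegral.intervalIntegral_pos_of_pos_on (hint t ht)
      (fun u hu => inv_pos.2 (hpos u (le_of_lt hu.1))) ht
  -- phi := fun t => t⁻¹ * F t is monotone on Ioi 0
  have hphi : MonotoneOn (fun t => t⁻¹ * F t) (Set.Ioi 0) := by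
    intro a ha b hb hab
    have ha' : (0:ℝ) < a := ha
    have hb' : (0:ℝ) < b := hb
    have h1 := hDHFR ha hb hab
    simp only [one_div] at h1
    have hpa : 0 < a⁻¹ * F a := mul_pos (inv_pos.2 ha') (hFpos a ha')
    have hpb : 0 < b⁻¹ * F b := mul_pos (inv_pos.2 hb') (hFpos b hb')
    exact (inv_le_inv₀ hpb hpa).mp h1
  intro t ht
  -- derivative of F at t
  have hct : ContinuousAt (fun u => (r u)⁻¹) t :=
    (hinvc t (le_of_lt ht)).continuousAt (Ici_mem_nhds ht)
  have hsm : StronglyMeasurableAtFilter (fun u => (r u)⁻¹) (nhds t) :=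
    (hinvc.mono (Set.Ioi_subset_Ici_self)).stronglyMeasurableAtFilter isOpen_Ioi _ ht
  have hFd : HasDerivAt F ((r t)⁻¹) t :=
    intervalIntegral.integral_hasDerivAt_right (hint t ht) hsm hct
  have hphid : HasDerivAt (fun x => x⁻¹ * F x) (-(t^2)⁻¹ * F t + t⁻¹ * (r t)⁻¹) t :=
    (hasDerivAt_inv ht.ne').mul hFd
  have hd0 : 0 ≤ -(t^2)⁻¹ * F t + t⁻¹ * (r t)⁻¹ := mono_deriv_nonneg ht hphi hphid
  -- deduce F t ≤ t / r t
  have hFle : F t ≤ t * (r t)⁻¹ := by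
    have h1 : (t^2)⁻¹ * F t ≤ t⁻¹ * (r t)⁻¹ := by linarith
    have h2 := mul_le_mul_of_nonneg_left h1 (le_of_lt (sq_nonneg t |>.lt_of_ne (by positivity)))
    calc F t = t^2 * ((t^2)⁻¹ * F t) := by field_simp
    _ ≤ t^2 * (t⁻¹ * (r t)⁻¹) := by
        exact mul_le_mul_of_nonneg_left h1 (by positivity)
    _ = t * (r t)⁻¹ := by rw [sq, mul_assoc, ← mul_assoc t t⁻¹, mul_inv_cancel₀ ht.ne', one_mul]
  -- pointwise log inequality and integral comparison
  have hrt : 0 < r t := hpos t (le_of_lt ht)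
  have hlogint : IntervalIntegrable (fun u => Real.log (r u)) MeasureTheory.volume 0 t := by
    apply ContinuousOn.intervalIntegrable
    rw [Set.uIcc_of_le ht.le]
    exact (Real.continuousOn_log.comp (hc.mono Set.Icc_subset_Ici_self)
      (fun u hu => (hpos u (Set.Icc_subset_Ici_self hu)).ne'))
  have haux : IntervalIntegrable (fun u => Real.log (r t) + 1 - r t * (r u)⁻¹)
      MeasureTheory.volume 0 t := by
    apply IntervalIntegrable.sub intervalIntegrable_const
    exact (hint t ht).const_mul _
  have hmono : ∫ u in (0:ℝ)..t, (Real.log (r t) + 1 - r t * (r u)⁻¹) ≤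
      ∫ u in (0:ℝ)..t, Real.log (r u) := by
    apply intervalIntegral.integral_mono_on ht.le haux hlogint
    intro u hu
    have hru : 0 < r u := hpos u hu.1
    have := Real.log_le_sub_one_of_pos (div_pos hrt hru)
    rw [Real.log_div hrt.ne' hru.ne'] at this
    rw [div_eq_mul_inv] at this
    linarith
  have hcalc : ∫ u in (0:ℝ)..t, (Real.log (r t) + 1 - r t * (r u)⁻¹) =
      (Real.log (r t) + 1) * t - r t * F t := by
    rw [intervalIntegral.integral_sub intervalIntegrable_const ((hint t ht).const_mul _),
      intervalIntegral.integral_const, intervalIntegral.integral_const_mul]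
    simp [hF, mul_comm]
  have key : t * Real.log (r t) ≤ ∫ u in (0:ℝ)..t, Real.log (r u) := by
    have h3 : r t * F t ≤ t := by
      calc r t * F t ≤ r t * (t * (r t)⁻¹) := by
            exact mul_le_mul_of_nonneg_left hFle (le_of_lt hrt)
      _ = t := by field_simp
    nlinarith [hmono, hcalc]
  have hexp : r t ≤ Real.exp ((1 / t) * ∫ u in (0:ℝ)..t, Real.log (r u)) := by
    rw [← Real.exp_log hrt]
    apply Real.exp_le_exp.2
    rw [one_div]
    calc Real.log (r t) = t⁻¹ * (t * Real.log (r t)) := by field_simp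
    _ ≤ t⁻¹ * ∫ u in (0:ℝ)..t, Real.log (r u) :=
        mul_le_mul_of_nonneg_left key (inv_nonneg.2 ht.le)
  exact div_le_one_of_le₀ hexp (le_of_lt (Real.exp_pos _))
end

section
/- Let r : [0,∞) → ℝ be strictly positive and continuously differentiable. Then the geometric mean failure rate satisfies G(t) = √(r(t)·r(0)) for all t > 0 if and only if there exists a constant k ∈ ℝ such that r(t) = r(0)·e^{kt} for all t ≥ 0 (equivalently r(t) = r(0)·(r(1)/r(0))^t, the failure rate of the truncated log-Weibull distribution). -/
open Real Set intervalIntegral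

/-!
With `f = log r`, the identity `G(t) = √(r t · r 0)` says exactly that the trapezoid rule is exact
for `∫₀ᵗ f` for every `t > 0`. For `F(t) = ∫₀ᵗ f` this reads `F(t) - f(0) t = t (f(t) - f(0)) / 2`;
since `F' = f`, the function `(F(t) - f(0) t) / t²` then has zero derivative on `(0, ∞)`. Hence `F` is quadratic, `f` is affine and `r` is exponential.
-/

section Trapezoid

variable {f : ℝ → ℝ}

theorem hasDerivAt_integral_of_continuousOn_Ici (hf : ContinuousOn f (Ici 0)) {t : ℝ}
    (ht : 0 < t) : HasDerivAt (fun s => ∫ u in (0:ℝ)..s, f u) (f t) t := by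
  have hnhds : Ici (0:ℝ) ∈ nhds t := Ici_mem_nhds ht
  refine integral_hasDerivAt_right ?_ ?_ ((hf t ht.le).continuousAt hnhds)
  · exact (hf.mono (by simp [uIcc_of_le ht.le, Icc_subset_Ici_self])).intervalIntegrable
  · exact (hf.mono Ioi_subset_Ici_self).stronglyMeasurableAtFilter isOpen_Ioi t ht

theorem exists_affine_of_integral_eq_trapezoid (hf : ContinuousOn f (Ici 0))
    (h : ∀ t > 0, ∫ u in (0:ℝ)..t, f u = t * (f t + f 0) / 2) :
    ∀ t ∈ Ici (0:ℝ), f t = f 0 + (f 1 - f 0) * t := by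
  set ψ : ℝ → ℝ := fun t => ((∫ u in (0:ℝ)..t, f u) - f 0 * t) / t ^ 2 with hψ
  have hψ' : ∀ t > 0, HasDerivAt ψ 0 t := by
    intro t ht
    refine (((hasDerivAt_integral_of_continuousOn_Ici hf ht).sub
      ((hasDerivAt_id t).const_mul (f 0))).div (hasDerivAt_pow 2 t) (by positivity)).congr_deriv ?_
    simp only [Pi.sub_apply, id, h t ht]
    field_simp
    ring
  have hconst : ∀ t > 0, ψ t = ψ 1 := fun t ht =>
    isOpen_Ioi.is_const_of_deriv_eq_zero isPreconnected_Ioi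
      (fun x hx => (hψ' x hx).differentiableAt.differentiableWithinAt)
      (fun x hx => (hψ' x hx).deriv) ht (mem_Ioi.mpr one_pos)
  intro t ht
  rcases (mem_Ici.mp ht).eq_or_lt with rfl | ht
  · simp
  have := hconst t ht
  simp only [hψ, h t ht, h 1 one_pos] at this
  field_simp at this
  linarith

theorem integral_eq_trapezoid_of_affine {k : ℝ} (hk : ∀ t ∈ Ici (0:ℝ), f t = f 0 + k * t)
    {t : ℝ} (ht : 0 ≤ t) : ∫ u in (0:ℝ)..t, f u = t * (f t + f 0) / 2 := by
  have hcongr : ∫ u in (0:ℝ)..t, f u = ∫ u in (0:ℝ)..t, (f 0 + k * u) :=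
    integral_congr fun u hu => hk u (by rw [uIcc_of_le ht] at hu; exact hu.1)
  rw [hcongr, integral_add intervalIntegrable_const (intervalIntegrable_id.const_mul k),
    integral_const, integral_const_mul, integral_id, hk t ht, smul_eq_mul]
  ring

theorem integral_eq_trapezoid_iff_affine (hf : ContinuousOn f (Ici 0)) :
    (∀ t > 0, ∫ u in (0:ℝ)..t, f u = t * (f t + f 0) / 2) ↔
      ∃ k, ∀ t ∈ Ici (0:ℝ), f t = f 0 + k * t :=
  ⟨fun h => ⟨_, exists_affine_of_integral_eq_trapezoid hf h⟩,
    fun ⟨_, hk⟩ _ ht => integral_eq_trapezoid_of_affine hk ht.le⟩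

end Trapezoid

theorem exp_one_div_mul_eq_sqrt_mul_iff {x y t I : ℝ} (hx : 0 < x) (hy : 0 < y) (ht : t ≠ 0) :
    exp (1 / t * I) = √(x * y) ↔ I = t * (log x + log y) / 2 := by
  rw [← exp_log (sqrt_pos.mpr (mul_pos hx hy)), log_sqrt (mul_pos hx hy).le,
    log_mul hx.ne' hy.ne', exp_eq_exp]
  constructor <;> intro h <;> field_simp at h ⊢ <;> linarith

theorem eq_mul_exp_iff_log_eq_add {x y s : ℝ} (hx : 0 < x) (hy : 0 < y) :
    x = y * exp s ↔ log x = log y + s := by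
  conv_lhs => rw [← exp_log hx, ← exp_log hy, ← exp_add, exp_eq_exp]

theorem GFR_sqrt_characterizes_truncated_logWeibull
    (r : ℝ → ℝ)
    (hsmooth : ContDiffOn ℝ 1 r (Set.Ici 0))
    (hpos : ∀ u ∈ Set.Ici (0 : ℝ), 0 < r u) :
    (∀ t > (0:ℝ),
        Real.exp ((1 / t) * ∫ u in (0:ℝ)..t, Real.log (r u)) =
          Real.sqrt (r t * r 0)) ↔
      ∃ k : ℝ, ∀ t ∈ Set.Ici (0:ℝ), r t = r 0 * Real.exp (k * t) := by
  have hr0 : 0 < r 0 := hpos 0 self_mem_Ici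
  have hlog : ContinuousOn (fun u => log (r u)) (Ici 0) :=
    hsmooth.continuousOn.log fun u hu => (hpos u hu).ne'
  calc (∀ t > (0:ℝ), exp ((1 / t) * ∫ u in (0:ℝ)..t, log (r u)) = √(r t * r 0))
      ↔ ∀ t > (0:ℝ), ∫ u in (0:ℝ)..t, log (r u) = t * (log (r t) + log (r 0)) / 2 :=
        forall₂_congr fun t ht => exp_one_div_mul_eq_sqrt_mul_iff (hpos t ht.le) hr0 ht.ne'
    _ ↔ ∃ k : ℝ, ∀ t ∈ Ici (0:ℝ), log (r t) = log (r 0) + k * t :=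
        integral_eq_trapezoid_iff_affine hlog
    _ ↔ ∃ k : ℝ, ∀ t ∈ Ici (0:ℝ), r t = r 0 * exp (k * t) :=
        exists_congr fun k => forall₂_congr fun t ht =>
          (eq_mul_exp_iff_log_eq_add (hpos t ht) hr0).symm
end

section
/- Let r : (0,∞) → ℝ be strictly positive and continuous with 1/r integrable near 0, and let c > 1/2. Then the harmonic aging intensity satisfies L^H(t) = c for all t > 0 if and only if there exist α > 0 and β = 2 − 1/c such that r(t) = α β t^{β−1} for all t > 0 (i.e., r is the failure rate of a two-parameter Weibull distribution with shape parameter β = 2 − 1/c). In particular, a constant harmonic aging intensity can only characterize Weibull distributions with shape parameter β < 2. -/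
/-!
If `L^H ≡ c`, then `F(t) = ∫₀ᵗ 1/r` satisfies `F = c t F'`, i.e. the Euler equation
`t F'(t) = F(t) / c`, whose positive solutions are `F(t) = F(1) t^{1/c}`; differentiating back
gives `r(t) = c t^{1 - 1/c} / F(1)`, a Weibull rate of shape `β = 2 - 1/c`, positive because
`c > 1/2`. Conversely, for a Weibull rate `∫₀ᵗ 1/r = t^{2-β} / (αβ(2-β))` whenever `β < 2`,
so `L^H ≡ 1/(2-β)`.
-/

open Set MeasureTheory

noncomputable section

def harmonicMeanRate (r : ℝ → ℝ) (t : ℝ) : ℝ :=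
  ((1 / t) * ∫ u in (0 : ℝ)..t, (r u)⁻¹)⁻¹

def harmonicAgingIntensity (r : ℝ → ℝ) (t : ℝ) : ℝ :=
  r t / harmonicMeanRate r t

def weibullRate (α β : ℝ) (t : ℝ) : ℝ :=
  α * β * t ^ (β - 1)

end

theorem harmonicAgingIntensity_eq (r : ℝ → ℝ) (t : ℝ) :
    harmonicAgingIntensity r t = r t * (∫ u in (0 : ℝ)..t, (r u)⁻¹) / t := by
  simp only [harmonicAgingIntensity, harmonicMeanRate, div_inv_eq_mul]
  ring

theorem harmonicAgingIntensity_congr {r s : ℝ → ℝ} (hrs : EqOn r s (Ioi 0)) {t : ℝ}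
    (ht : 0 < t) : harmonicAgingIntensity r t = harmonicAgingIntensity s t := by
  have hsub : uIoc 0 t ⊆ Ioi 0 := by
    rw [uIoc_of_le ht.le]
    exact Ioc_subset_Ioi_self
  rw [harmonicAgingIntensity_eq, harmonicAgingIntensity_eq, hrs ht,
    intervalIntegral.integral_congr_ae (ae_of_all _ fun u hu => by rw [hrs (hsub hu)])]

theorem integral_inv_weibullRate (α : ℝ) {β t : ℝ} (hβ : β < 2) (ht : 0 ≤ t) :
    ∫ u in (0 : ℝ)..t, (weibullRate α β u)⁻¹ = t ^ (2 - β) / (α * β * (2 - β)) := by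
  have hpow : ∀ᵐ u, u ∈ uIoc 0 t → (weibullRate α β u)⁻¹ = (α * β)⁻¹ * u ^ (1 - β) := by
    refine ae_of_all _ fun u hu => ?_
    rw [uIoc_of_le ht] at hu
    rw [weibullRate, mul_inv, ← Real.rpow_neg hu.1.le, neg_sub]
  rw [intervalIntegral.integral_congr_ae hpow, intervalIntegral.integral_const_mul,
    integral_rpow (Or.inl (by linarith)), show 1 - β + 1 = 2 - β by ring,
    Real.zero_rpow (by linarith), sub_zero]
  field_simp

theorem harmonicAgingIntensity_weibullRate {α β t : ℝ} (hα : α ≠ 0) (hβ₀ : β ≠ 0) (hβ : β < 2)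
    (ht : 0 < t) : harmonicAgingIntensity (weibullRate α β) t = 1 / (2 - β) := by
  have h2β : 2 - β ≠ 0 := by linarith
  have hpow : t ^ (β - 1) * t ^ (2 - β) = t := by
    rw [← Real.rpow_add ht, show β - 1 + (2 - β) = 1 by ring, Real.rpow_one]
  rw [harmonicAgingIntensity_eq, integral_inv_weibullRate α hβ ht.le, weibullRate]
  field_simp
  linear_combination hpow

theorem hasDerivAt_integral_of_continuousOn_Ioi {f : ℝ → ℝ} (hf : ContinuousOn f (Ioi 0))
    {t : ℝ} (ht : 0 < t) (hint : IntervalIntegrable f volume 0 t) :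
    HasDerivAt (fun x => ∫ u in (0 : ℝ)..x, f u) (f t) t :=
  intervalIntegral.integral_hasDerivAt_right hint (hf.stronglyMeasurableAtFilter isOpen_Ioi t ht)
    (hf.continuousAt (isOpen_Ioi.mem_nhds ht))

theorem eq_mul_rpow_of_hasDerivAt {F : ℝ → ℝ} {k : ℝ}
    (hF : ∀ t > 0, HasDerivAt F (k * F t / t) t) {t : ℝ} (ht : 0 < t) :
    F t = F 1 * t ^ k := by
  set G : ℝ → ℝ := fun x => F x * x ^ (-k)
  have hG : ∀ x > 0, HasDerivAt G 0 x := by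
    intro x hx
    have hpow : x ^ (-k - 1) = x ^ (-k) / x := by rw [Real.rpow_sub hx, Real.rpow_one]
    refine ((hF x hx).mul (Real.hasDerivAt_rpow_const (p := -k) (Or.inl hx.ne'))).congr_deriv ?_
    rw [hpow]
    field_simp
    ring
  have hconst : G t = G 1 :=
    isOpen_Ioi.is_const_of_deriv_eq_zero isPreconnected_Ioi
      (fun x hx => (hG x hx).differentiableAt.differentiableWithinAt)
      (fun x hx => (hG x hx).deriv) ht (mem_Ioi.2 one_pos)
  simp only [G, Real.one_rpow, mul_one] at hconst
  rw [← hconst, mul_assoc, ← Real.rpow_add ht, neg_add_cancel, Real.rpow_zero, mul_one]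

theorem two_sub_one_div_pos {c : ℝ} (hc : 1 / 2 < c) : 0 < 2 - 1 / c := by
  rw [sub_pos, div_lt_iff₀ (by linarith)]
  linarith

section Characterization

variable {r : ℝ → ℝ} {c : ℝ}

theorem integral_inv_eq_mul_rpow_of_harmonicAgingIntensity_eq (hc : ContinuousOn r (Ioi 0))
    (hpos : ∀ t ∈ Ioi (0 : ℝ), 0 < r t)
    (hint : ∀ t > (0 : ℝ), IntervalIntegrable (fun u => (r u)⁻¹) volume 0 t) (hc0 : c ≠ 0)
    (h : ∀ t > (0 : ℝ), harmonicAgingIntensity r t = c) {t : ℝ} (ht : 0 < t) :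
    ∫ u in (0 : ℝ)..t, (r u)⁻¹ = (∫ u in (0 : ℝ)..1, (r u)⁻¹) * t ^ (1 / c) := by
  refine eq_mul_rpow_of_hasDerivAt (F := fun x => ∫ u in (0 : ℝ)..x, (r u)⁻¹) (fun x hx => ?_) ht
  refine (hasDerivAt_integral_of_continuousOn_Ioi (hc.inv₀ fun u hu => (hpos u hu).ne') hx
    (hint x hx)).congr_deriv ?_
  have hrx := h x hx
  rw [harmonicAgingIntensity_eq, div_eq_iff hx.ne'] at hrx
  show (r x)⁻¹ = _
  generalize ∫ u in (0 : ℝ)..x, (r u)⁻¹ = F at hrx ⊢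
  have := (hpos x hx).ne'
  field_simp
  linear_combination -hrx

theorem weibullRate_of_harmonicAgingIntensity_eq (hc : ContinuousOn r (Ioi 0))
    (hpos : ∀ t ∈ Ioi (0 : ℝ), 0 < r t)
    (hint : ∀ t > (0 : ℝ), IntervalIntegrable (fun u => (r u)⁻¹) volume 0 t) (hc0 : 1 / 2 < c)
    (h : ∀ t > (0 : ℝ), harmonicAgingIntensity r t = c) :
    ∃ α > (0 : ℝ), ∀ t > (0 : ℝ), r t = weibullRate α (2 - 1 / c) t := by
  have hcpos : 0 < c := by linarith
  have hβ := two_sub_one_div_pos hc0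
  have hK : 0 < ∫ u in (0 : ℝ)..1, (r u)⁻¹ :=
    intervalIntegral.intervalIntegral_pos_of_pos_on (hint 1 one_pos)
      (fun u hu => inv_pos.2 (hpos u hu.1)) one_pos
  have hF := fun t (ht : 0 < t) =>
    integral_inv_eq_mul_rpow_of_harmonicAgingIntensity_eq hc hpos hint hcpos.ne' h ht
  set K := ∫ u in (0 : ℝ)..1, (r u)⁻¹
  refine ⟨c / (K * (2 - 1 / c)), by positivity, fun t ht => ?_⟩
  have hrt := h t ht
  rw [harmonicAgingIntensity_eq, hF t ht, div_eq_iff ht.ne'] at hrt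
  have hpow : t ^ (2 - 1 / c - 1) = t / t ^ (1 / c) := by
    rw [show 2 - 1 / c - 1 = 1 - 1 / c by ring, Real.rpow_sub ht, Real.rpow_one]
  have hcoef : c / (K * (2 - 1 / c)) * (2 - 1 / c) = c / K := by
    rw [div_mul_eq_mul_div, mul_div_mul_right _ _ hβ.ne']
  have := ht.ne'
  have := (Real.rpow_pos_of_pos ht (1 / c)).ne'
  rw [weibullRate, hcoef, hpow]
  field_simp
  linear_combination hrt

end Characterization

theorem constant_HAI_characterizes_Weibull
    (r : ℝ → ℝ) (c : ℝ)
    (hc : ContinuousOn r (Set.Ioi 0))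
    (hpos : ∀ t ∈ Set.Ioi (0 : ℝ), 0 < r t)
    (hint : ∀ t > (0:ℝ),
      IntervalIntegrable (fun u => (r u)⁻¹) MeasureTheory.volume 0 t)
    (hc0 : 1 / 2 < c) :
    ((∀ t > (0:ℝ),
        r t / ((1 / t) * ∫ u in (0:ℝ)..t, (r u)⁻¹)⁻¹ = c) ↔
      ∃ α > (0:ℝ), ∀ t > (0:ℝ),
        r t = α * (2 - 1 / c) * t ^ (2 - 1 / c - 1)) ∧
    2 - 1 / c < 2 := by
  have hβ := two_sub_one_div_pos hc0
  have hβ2 : 2 - 1 / c < 2 := sub_lt_self 2 (one_div_pos.2 (by linarith))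
  refine ⟨⟨weibullRate_of_harmonicAgingIntensity_eq hc hpos hint hc0, ?_⟩, hβ2⟩
  rintro ⟨α, hα, hr⟩ t ht
  change harmonicAgingIntensity r t = c
  rw [harmonicAgingIntensity_congr (s := weibullRate α (2 - 1 / c)) (fun u hu => hr u hu) ht,
    harmonicAgingIntensity_weibullRate hα.ne' hβ.ne' hβ2 ht, sub_sub_cancel, one_div_one_div]
end

section
/- Let f₁, …, fₙ : [0,∞) → ℝ be continuous and strictly positive, and for a continuous strictly positive function f define the geometric-mean functional G(f)(t) = exp((1/t)∫₀ᵗ ln f(u) du) for t > 0. Then for every t > 0, G(f₁ + ⋯ + fₙ)(t) ≥ G(f₁)(t) + ⋯ + G(fₙ)(t). -/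
/-!
Put `S = f₁ + ⋯ + fₙ`. The geometric mean is multiplicative, so `G(fᵢ) = G(S) · G(fᵢ / S)`, and
by Jensen's inequality for `exp` (the integral AM–GM inequality) `G(fᵢ / S) ≤ ∫ fᵢ / S` for the
uniform probability measure on `(0, t]`. Summing over `i`, the right-hand sides add up to
`∫ S / S = 1`.
-/

open MeasureTheory ProbabilityTheory Real Finset

variable {α : Type*} [MeasurableSpace α] {μ : Measure α}

/-- For the uniform probability measure on `(0, t]` this is `G(f)(t)`. -/
noncomputable def geomMean (μ : Measure α) (f : α → ℝ) : ℝ :=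
  exp (∫ x, log (f x) ∂μ)

theorem aestronglyMeasurable_of_log {f : α → ℝ} (hf : ∀ᵐ x ∂μ, 0 < f x)
    (hlog : AEStronglyMeasurable (fun x => log (f x)) μ) : AEStronglyMeasurable f μ :=
  (continuous_exp.comp_aestronglyMeasurable hlog).congr <| by
    filter_upwards [hf] with x hx using exp_log hx

theorem integrable_log_div {f g : α → ℝ} (hf : ∀ᵐ x ∂μ, f x ≠ 0) (hg : ∀ᵐ x ∂μ, g x ≠ 0)
    (hlf : Integrable (fun x => log (f x)) μ) (hlg : Integrable (fun x => log (g x)) μ) :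
    Integrable (fun x => log (f x / g x)) μ :=
  (hlf.sub hlg).congr <| by
    filter_upwards [hf, hg] with x hfx hgx using (log_div hfx hgx).symm

theorem geomMean_div {f g : α → ℝ} (hf : ∀ᵐ x ∂μ, f x ≠ 0) (hg : ∀ᵐ x ∂μ, g x ≠ 0)
    (hlf : Integrable (fun x => log (f x)) μ) (hlg : Integrable (fun x => log (g x)) μ) :
    geomMean μ (fun x => f x / g x) = geomMean μ f / geomMean μ g := by
  rw [geomMean, geomMean, geomMean, ← exp_sub, ← integral_sub hlf hlg]
  congr 1
  refine integral_congr_ae ?_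
  filter_upwards [hf, hg] with x hfx hgx using log_div hfx hgx

theorem geomMean_le_integral [IsProbabilityMeasure μ] {f : α → ℝ} (hf : ∀ᵐ x ∂μ, 0 < f x)
    (hlog : Integrable (fun x => log (f x)) μ) (hint : Integrable f μ) :
    geomMean μ f ≤ ∫ x, f x ∂μ := by
  have hexp_log : (fun x => exp (log (f x))) =ᵐ[μ] f := by
    filter_upwards [hf] with x hx using exp_log hx
  have jensen := convexOn_exp.map_average_le continuousOn_exp isClosed_univ
    (ae_of_all _ fun _ => Set.mem_univ _) hlog (hint.congr hexp_log.symm)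
  rwa [average_eq_integral, average_eq_integral, integral_congr_ae hexp_log] at jensen

/-- From `a_{i₀} ≤ ∑ aᵢ ≤ #s · exp (∑ |log aᵢ|)`. -/
theorem abs_log_sum_le_log_card_add_sum_abs_log {ι : Type*} {s : Finset ι} (hs : s.Nonempty)
    {a : ι → ℝ} (ha : ∀ i ∈ s, 0 < a i) :
    |log (∑ i ∈ s, a i)| ≤ log #s + ∑ i ∈ s, |log (a i)| := by
  obtain ⟨i₀, hi₀⟩ := hs
  set L := ∑ i ∈ s, |log (a i)|
  have hle_L : ∀ i ∈ s, |log (a i)| ≤ L := fun i hi =>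
    single_le_sum (f := fun i => |log (a i)|) (fun _ _ => abs_nonneg _) hi
  have hcard : (1 : ℝ) ≤ #s := by exact_mod_cast s.card_pos.2 ⟨i₀, hi₀⟩
  have hlower : a i₀ ≤ ∑ i ∈ s, a i := single_le_sum (fun i hi => (ha i hi).le) hi₀
  have hupper : ∑ i ∈ s, a i ≤ #s * exp L := by
    rw [← nsmul_eq_mul]
    refine sum_le_card_nsmul s _ _ fun i hi => ?_
    rw [← exp_log (ha i hi)]
    exact exp_le_exp.2 ((le_abs_self _).trans (hle_L i hi))
  rw [abs_le]
  constructor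
  · have := log_le_log (ha i₀ hi₀) hlower
    have := neg_abs_le (log (a i₀))
    have := hle_L i₀ hi₀
    have := log_nonneg hcard
    linarith
  · calc log (∑ i ∈ s, a i) ≤ log (#s * exp L) := log_le_log (sum_pos ha ⟨i₀, hi₀⟩) hupper
      _ = log #s + L := by rw [log_mul (by positivity) (exp_pos L).ne', log_exp]

theorem integrable_log_sum [IsFiniteMeasure μ] {ι : Type*} {s : Finset ι} {f : ι → α → ℝ}
    (hpos : ∀ i ∈ s, ∀ᵐ x ∂μ, 0 < f i x)
    (hlog : ∀ i ∈ s, Integrable (fun x => log (f i x)) μ) :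
    Integrable (fun x => log (∑ i ∈ s, f i x)) μ := by
  rcases s.eq_empty_or_nonempty with rfl | hs
  · simp
  have hmeas : AEStronglyMeasurable (fun x => ∑ i ∈ s, f i x) μ :=
    s.aestronglyMeasurable_fun_sum fun i hi =>
      aestronglyMeasurable_of_log (hpos i hi) (hlog i hi).aestronglyMeasurable
  refine ((integrable_const (log #s)).add
    (integrable_finsetSum s fun i hi => (hlog i hi).abs)).mono'
    (measurable_log.comp_aemeasurable hmeas.aemeasurable).aestronglyMeasurable ?_
  filter_upwards [(Filter.eventually_all_finset s).2 hpos] with x hx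
  simpa using abs_log_sum_le_log_card_add_sum_abs_log hs hx

theorem integrable_div_of_le [IsFiniteMeasure μ] {f g : α → ℝ} (hf : ∀ᵐ x ∂μ, 0 < f x)
    (hfg : ∀ᵐ x ∂μ, f x ≤ g x) (hlf : Integrable (fun x => log (f x)) μ)
    (hlg : Integrable (fun x => log (g x)) μ) : Integrable (fun x => f x / g x) μ := by
  have hg : ∀ᵐ x ∂μ, 0 < g x := by filter_upwards [hf, hfg] with x hfx hgx using hfx.trans_le hgx
  have hquot : ∀ᵐ x ∂μ, 0 < f x / g x := by
    filter_upwards [hf, hg] with x hfx hgx using div_pos hfx hgx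
  have hlog_quot := integrable_log_div (hf.mono fun _ h => h.ne') (hg.mono fun _ h => h.ne') hlf hlg
  refine Integrable.of_bound (aestronglyMeasurable_of_log hquot hlog_quot.aestronglyMeasurable) 1 ?_
  filter_upwards [hquot, hg, hfg] with x hq hgx hfgx
  rw [Real.norm_eq_abs, abs_of_pos hq, div_le_one hgx]
  exact hfgx

theorem geomMean_div_le_integral_div [IsProbabilityMeasure μ] {f g : α → ℝ}
    (hf : ∀ᵐ x ∂μ, 0 < f x) (hfg : ∀ᵐ x ∂μ, f x ≤ g x) (hlf : Integrable (fun x => log (f x)) μ)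
    (hlg : Integrable (fun x => log (g x)) μ) :
    geomMean μ f / geomMean μ g ≤ ∫ x, f x / g x ∂μ := by
  have hg : ∀ᵐ x ∂μ, 0 < g x := by filter_upwards [hf, hfg] with x hfx hgx using hfx.trans_le hgx
  have hf_ne : ∀ᵐ x ∂μ, f x ≠ 0 := hf.mono fun _ h => h.ne'
  have hg_ne : ∀ᵐ x ∂μ, g x ≠ 0 := hg.mono fun _ h => h.ne'
  rw [← geomMean_div hf_ne hg_ne hlf hlg]
  refine geomMean_le_integral ?_ (integrable_log_div hf_ne hg_ne hlf hlg)
    (integrable_div_of_le hf hfg hlf hlg)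
  filter_upwards [hf, hg] with x hfx hgx using div_pos hfx hgx

theorem sum_geomMean_le_geomMean_sum [IsProbabilityMeasure μ] {ι : Type*} (s : Finset ι)
    {f : ι → α → ℝ} (hpos : ∀ i ∈ s, ∀ᵐ x ∂μ, 0 < f i x)
    (hlog : ∀ i ∈ s, Integrable (fun x => log (f i x)) μ) :
    ∑ i ∈ s, geomMean μ (f i) ≤ geomMean μ (fun x => ∑ i ∈ s, f i x) := by
  set S := fun x => ∑ i ∈ s, f i x
  have hlogS : Integrable (fun x => log (S x)) μ := integrable_log_sum hpos hlog
  have hle_S : ∀ i ∈ s, ∀ᵐ x ∂μ, f i x ≤ S x := fun i hi => by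
    filter_upwards [(Filter.eventually_all_finset s).2 hpos] with x hx
    exact single_le_sum (fun j hj => (hx j hj).le) hi
  have hquot_int : ∀ i ∈ s, Integrable (fun x => f i x / S x) μ := fun i hi =>
    integrable_div_of_le (hpos i hi) (hle_S i hi) (hlog i hi) hlogS
  have hGS : 0 < geomMean μ S := exp_pos _
  calc ∑ i ∈ s, geomMean μ (f i)
      = geomMean μ S * ∑ i ∈ s, geomMean μ (f i) / geomMean μ S := by
        rw [mul_sum]
        exact sum_congr rfl fun i _ => (mul_div_cancel₀ _ hGS.ne').symm
    _ ≤ geomMean μ S * ∑ i ∈ s, ∫ x, f i x / S x ∂μ := by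
        gcongr with i hi
        exact geomMean_div_le_integral_div (hpos i hi) (hle_S i hi) (hlog i hi) hlogS
    _ = geomMean μ S * ∫ x, S x / S x ∂μ := by
        simp only [← integral_finsetSum s hquot_int, ← sum_div, S]
    _ ≤ geomMean μ S * ∫ _, (1 : ℝ) ∂μ := by
        gcongr
        · exact (integrable_finsetSum s hquot_int).congr (ae_of_all _ fun x => by simp [sum_div, S])
        · exact integrable_const 1
        · exact fun x => div_self_le_one _
    _ = geomMean μ S := by simp

theorem inv_sub_mul_intervalIntegral_eq_integral_cond {a b : ℝ} (hab : a ≤ b) (g : ℝ → ℝ) :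
    (b - a)⁻¹ * ∫ u in a..b, g u = ∫ u, g u ∂volume[|Set.Ioc a b] := by
  rw [← smul_eq_mul, ← interval_average_eq, Set.uIoc_of_le hab, setAverage_eq']
  rfl

theorem ContinuousOn.integrable_cond_Ioc {a b : ℝ} (hab : a < b) {g : ℝ → ℝ}
    (hg : ContinuousOn g (Set.Icc a b)) : Integrable g volume[|Set.Ioc a b] :=
  (hg.integrableOn_Icc.mono_set Set.Ioc_subset_Icc_self).smul_measure
    (ENNReal.inv_ne_top.2 (by simp [hab]))

theorem integral_geometric_mean_superadditive
    (n : ℕ) (f : Fin n → ℝ → ℝ)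
    (hc : ∀ i, ContinuousOn (f i) (Set.Ici 0))
    (hpos : ∀ i, ∀ u ∈ Set.Ici (0 : ℝ), 0 < f i u) :
    ∀ t > (0:ℝ),
      (∑ i, Real.exp ((1 / t) * ∫ u in (0:ℝ)..t, Real.log (f i u))) ≤
        Real.exp ((1 / t) * ∫ u in (0:ℝ)..t, Real.log (∑ i, f i u)) := by
  intro t ht
  have : IsProbabilityMeasure volume[|Set.Ioc 0 t] :=
    cond_isProbabilityMeasure_of_finite (by simp [ht]) (by simp)
  have hmean (g : ℝ → ℝ) : (1 / t) * ∫ u in (0:ℝ)..t, g u = ∫ u, g u ∂volume[|Set.Ioc 0 t] := by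
    simpa using inv_sub_mul_intervalIntegral_eq_integral_cond ht.le g
  simp only [hmean]
  refine sum_geomMean_le_geomMean_sum univ (fun i _ => ?_) (fun i _ => ?_)
  · exact ae_cond_of_forall_mem measurableSet_Ioc fun u hu => hpos i u (Set.mem_Ici.2 hu.1.le)
  · refine ContinuousOn.integrable_cond_Ioc ht (((hc i).mono Set.Icc_subset_Ici_self).log ?_)
    exact fun u hu => (hpos i u hu.1).ne'
end

section
/- Let r₁, …, rₙ : [0,∞) → ℝ be continuous and strictly positive (the failure rates of n independent components), and let r = r₁ + ⋯ + rₙ (the failure rate of the series system). Then for every t > 0 the geometric aging intensity of the series system is bounded above by the largest component geometric aging intensity: r(t)/G(r)(t) ≤ max_{1 ≤ i ≤ n} rᵢ(t)/G(rᵢ)(t), where G(f)(t) = exp((1/t)∫₀ᵗ ln f(u) du). -/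
/-!
The geometric mean is superadditive, `G(r₁) + ⋯ + G(rₙ) ≤ G(r₁ + ⋯ + rₙ)`: each quotient
`G(rᵢ)/G(r) = G(rᵢ/r)` is at most the arithmetic mean of `rᵢ/r` (Jensen's inequality for `exp`),
and the quotients `rᵢ/r` sum to `1`. Hence
`r(t) = ∑ (rᵢ(t)/G(rᵢ)(t)) · G(rᵢ)(t) ≤ (maxᵢ rᵢ(t)/G(rᵢ)(t)) · G(r)(t)`.
-/

open MeasureTheory Set Real

theorem Real.exp_intervalAverage_le {h : ℝ → ℝ} {a b : ℝ} (hab : a ≠ b)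
    (hh : IntervalIntegrable h volume a b)
    (hexp : IntervalIntegrable (fun x => exp (h x)) volume a b) :
    exp (⨍ x in a..b, h x) ≤ ⨍ x in a..b, exp (h x) :=
  convexOn_exp.map_set_average_le continuous_exp.continuousOn isClosed_univ
    (by simp [volume_uIoc, sub_ne_zero.2 hab.symm]) (by simp [volume_uIoc])
    (ae_of_all _ fun _ => mem_univ _) hh.def' hexp.def'

noncomputable def geometricMean (f : ℝ → ℝ) (t : ℝ) : ℝ :=
  exp ((1 / t) * ∫ u in (0:ℝ)..t, log (f u))

theorem geometricMean_eq_exp_intervalAverage (f : ℝ → ℝ) (t : ℝ) :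
    geometricMean f t = exp (⨍ u in (0:ℝ)..t, log (f u)) := by
  rw [geometricMean, interval_average_eq, sub_zero, one_div, smul_eq_mul]

theorem geometricMean_pos (f : ℝ → ℝ) (t : ℝ) : 0 < geometricMean f t := exp_pos _

section

variable {f g : ℝ → ℝ} {t : ℝ}

theorem geometricMean_le_intervalAverage (ht : t ≠ 0) (hf : ContinuousOn f (uIcc 0 t))
    (hpos : ∀ u ∈ uIcc 0 t, 0 < f u) :
    geometricMean f t ≤ ⨍ u in (0:ℝ)..t, f u := by
  have hlog : ContinuousOn (fun u => log (f u)) (uIcc 0 t) :=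
    hf.log fun u hu => (hpos u hu).ne'
  have hexp_log : EqOn (fun u => exp (log (f u))) f (uIcc 0 t) :=
    fun u hu => exp_log (hpos u hu)
  calc geometricMean f t = exp (⨍ u in (0:ℝ)..t, log (f u)) :=
        geometricMean_eq_exp_intervalAverage f t
    _ ≤ ⨍ u in (0:ℝ)..t, exp (log (f u)) :=
        exp_intervalAverage_le ht.symm hlog.intervalIntegrable
          (continuous_exp.comp_continuousOn hlog).intervalIntegrable
    _ = ⨍ u in (0:ℝ)..t, f u := by
        rw [interval_average_eq, interval_average_eq, intervalIntegral.integral_congr hexp_log]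

theorem geometricMean_div (hf : ContinuousOn f (uIcc 0 t)) (hg : ContinuousOn g (uIcc 0 t))
    (hfpos : ∀ u ∈ uIcc 0 t, 0 < f u) (hgpos : ∀ u ∈ uIcc 0 t, 0 < g u) :
    geometricMean (fun u => f u / g u) t = geometricMean f t / geometricMean g t := by
  have hlog_div : EqOn (fun u => log (f u / g u)) (fun u => log (f u) - log (g u)) (uIcc 0 t) :=
    fun u hu => log_div (hfpos u hu).ne' (hgpos u hu).ne'
  rw [geometricMean, geometricMean, geometricMean, ← exp_sub, ← mul_sub,
    intervalIntegral.integral_congr hlog_div, intervalIntegral.integral_sub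
      (hf.log fun u hu => (hfpos u hu).ne').intervalIntegrable
      (hg.log fun u hu => (hgpos u hu).ne').intervalIntegrable]

end

theorem sum_geometricMean_le_geometricMean_sum {ι : Type*} {s : Finset ι} {f : ι → ℝ → ℝ}
    {t : ℝ} (ht : t ≠ 0) (hf : ∀ i ∈ s, ContinuousOn (f i) (uIcc 0 t))
    (hpos : ∀ i ∈ s, ∀ u ∈ uIcc 0 t, 0 < f i u) :
    ∑ i ∈ s, geometricMean (f i) t ≤ geometricMean (fun u => ∑ i ∈ s, f i u) t := by
  rcases s.eq_empty_or_nonempty with rfl | hs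
  · simpa using (geometricMean_pos _ t).le
  set S : ℝ → ℝ := fun u => ∑ i ∈ s, f i u
  have hS : ContinuousOn S (uIcc 0 t) := continuousOn_finsetSum s hf
  have hSpos : ∀ u ∈ uIcc 0 t, 0 < S u := fun u hu => Finset.sum_pos (fun i hi => hpos i hi u hu) hs
  have hquot : ∀ i ∈ s, ContinuousOn (fun u => f i u / S u) (uIcc 0 t) :=
    fun i hi => (hf i hi).div hS fun u hu => (hSpos u hu).ne'
  have hsum_quot : ∑ i ∈ s, ⨍ u in (0:ℝ)..t, f i u / S u = 1 := by
    have hone : EqOn (fun u => ∑ i ∈ s, f i u / S u) 1 (uIcc 0 t) :=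
      fun u hu => by simp only [← Finset.sum_div]; exact div_self (hSpos u hu).ne'
    simp_rw [interval_average_eq, ← Finset.smul_sum]
    rw [← intervalIntegral.integral_finsetSum fun i hi => (hquot i hi).intervalIntegrable,
      intervalIntegral.integral_congr hone]
    simp [ht]
  calc ∑ i ∈ s, geometricMean (f i) t
      = geometricMean S t * ∑ i ∈ s, geometricMean (fun u => f i u / S u) t := by
        rw [Finset.mul_sum]
        refine Finset.sum_congr rfl fun i hi => ?_
        rw [geometricMean_div (hf i hi) hS (hpos i hi) hSpos, mul_div_cancel₀ _ (geometricMean_pos S t).ne']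
    _ ≤ geometricMean S t * ∑ i ∈ s, ⨍ u in (0:ℝ)..t, f i u / S u := by
        gcongr with i hi
        · exact (geometricMean_pos S t).le
        exact geometricMean_le_intervalAverage ht (hquot i hi)
          fun u hu => div_pos (hpos i hi u hu) (hSpos u hu)
    _ = geometricMean S t := by rw [hsum_quot, mul_one]

theorem Finset.sum_div_le_sup'_div {ι : Type*} {s : Finset ι} (hs : s.Nonempty) {x g : ι → ℝ}
    {G : ℝ} (hx : ∀ i ∈ s, 0 ≤ x i) (hg : ∀ i ∈ s, 0 < g i) (hG : 0 < G)
    (hsum : ∑ i ∈ s, g i ≤ G) :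
    (∑ i ∈ s, x i) / G ≤ s.sup' hs (fun i => x i / g i) := by
  set M := s.sup' hs (fun i => x i / g i)
  have hM : 0 ≤ M := by
    obtain ⟨j, hj⟩ := hs
    exact (div_nonneg (hx j hj) (hg j hj).le).trans (s.le_sup' (fun i => x i / g i) hj)
  have hle : ∀ i ∈ s, x i ≤ M * g i := fun i hi =>
    (div_le_iff₀ (hg i hi)).1 (s.le_sup' (fun i => x i / g i) hi)
  rw [div_le_iff₀ hG]
  calc ∑ i ∈ s, x i ≤ ∑ i ∈ s, M * g i := Finset.sum_le_sum hle
    _ = M * ∑ i ∈ s, g i := (Finset.mul_sum _ _ _).symm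
    _ ≤ M * G := mul_le_mul_of_nonneg_left hsum hM

theorem series_system_GAI_upper_bound
    (n : ℕ) (hn : 0 < n) (r : Fin n → ℝ → ℝ)
    (hc : ∀ i, ContinuousOn (r i) (Set.Ici 0))
    (hpos : ∀ i, ∀ u ∈ Set.Ici (0 : ℝ), 0 < r i u) :
    ∀ t > (0:ℝ),
      (∑ i, r i t) /
          Real.exp ((1 / t) * ∫ u in (0:ℝ)..t, Real.log (∑ i, r i u)) ≤
        Finset.univ.sup' ⟨⟨0, hn⟩, Finset.mem_univ _⟩
          (fun i => r i t /
            Real.exp ((1 / t) * ∫ u in (0:ℝ)..t, Real.log (r i u))) := by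
  intro t ht
  have hsub : uIcc 0 t ⊆ Ici 0 := by
    rw [uIcc_of_le ht.le]; exact Icc_subset_Ici_self
  exact Finset.sum_div_le_sup'_div _ (fun i _ => (hpos i t ht.le).le)
    (fun i _ => geometricMean_pos (r i) t) (geometricMean_pos _ t)
    (sum_geometricMean_le_geometricMean_sum ht.ne' (fun i _ => (hc i).mono hsub)
      fun i _ u hu => hpos i u (hsub hu))
end

section
/- Let r₁, …, rₙ : [0,∞) → ℝ be continuous and strictly positive (the failure rates of n independent components), and let r = r₁ + ⋯ + rₙ (the failure rate of the series system). Then for every t > 0 the geometric mean failure rate of the series system satisfies G(r)(t) ≥ n·(∏_{i=1}^n G(rᵢ)(t))^{1/n}, where G(f)(t) = exp((1/t)∫₀ᵗ ln f(u) du); the right-hand side is n times the discrete geometric mean of the component geometric mean failure rates. -/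
/-!
Pointwise, the AM–GM inequality (Jensen for the concave `log`) gives
`log n + (1/n) ∑ᵢ log rᵢ(u) ≤ log (∑ᵢ rᵢ(u))`. Averaging over `[0, t]` preserves this, and
exponentiating turns the left-hand side into `n` times the geometric mean of the `G(rᵢ)(t)`.
-/

open Real Finset

theorem Real.log_card_add_mean_log_le_log_sum {ι : Type*} {s : Finset ι} (hs : s.Nonempty)
    {z : ι → ℝ} (hz : ∀ i ∈ s, 0 < z i) :
    log #s + (#s : ℝ)⁻¹ * ∑ i ∈ s, log (z i) ≤ log (∑ i ∈ s, z i) := by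
  have hcard : (0 : ℝ) < #s := by exact_mod_cast hs.card_pos
  have hsum : 0 < ∑ i ∈ s, z i := sum_pos hz hs
  have jensen := strictConcaveOn_log_Ioi.concaveOn.le_map_sum (t := s) (p := z)
    (w := fun _ => (#s : ℝ)⁻¹) (fun _ _ => by positivity)
    (by simp [mul_inv_cancel₀ hcard.ne']) hz
  simp only [smul_eq_mul, ← mul_sum] at jensen
  rw [log_mul (inv_ne_zero hcard.ne') hsum.ne', log_inv] at jensen
  linarith

theorem intervalIntegral.integral_log_card_add_mean_log_le {ι : Type*} {s : Finset ι}
    (hs : s.Nonempty) {a b : ℝ} (hab : a ≤ b) {r : ι → ℝ → ℝ}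
    (hc : ∀ i ∈ s, ContinuousOn (r i) (Set.Icc a b))
    (hpos : ∀ i ∈ s, ∀ u ∈ Set.Icc a b, 0 < r i u) :
    (b - a) * log #s + (#s : ℝ)⁻¹ * ∑ i ∈ s, ∫ u in a..b, log (r i u)
      ≤ ∫ u in a..b, log (∑ i ∈ s, r i u) := by
  have hlog : ∀ i ∈ s, ContinuousOn (fun u => log (r i u)) (Set.Icc a b) := fun i hi =>
    (hc i hi).log fun u hu => (hpos i hi u hu).ne'
  have hlogSum : ContinuousOn (fun u => log (∑ i ∈ s, r i u)) (Set.Icc a b) :=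
    (continuousOn_finsetSum s hc).log fun u hu => (sum_pos (fun i hi => hpos i hi u hu) hs).ne'
  have hmean : ContinuousOn (fun u => (#s : ℝ)⁻¹ * ∑ i ∈ s, log (r i u)) (Set.Icc a b) :=
    continuousOn_const.mul (continuousOn_finsetSum s hlog)
  calc (b - a) * log #s + (#s : ℝ)⁻¹ * ∑ i ∈ s, ∫ u in a..b, log (r i u)
      = ∫ u in a..b, (log #s + (#s : ℝ)⁻¹ * ∑ i ∈ s, log (r i u)) := by
        rw [integral_add intervalIntegrable_const (hmean.intervalIntegrable_of_Icc hab),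
          integral_const, integral_const_mul,
          integral_finsetSum fun i hi => (hlog i hi).intervalIntegrable_of_Icc hab, smul_eq_mul]
    _ ≤ ∫ u in a..b, log (∑ i ∈ s, r i u) :=
        integral_mono_on hab (continuousOn_const.add hmean |>.intervalIntegrable_of_Icc hab)
          (hlogSum.intervalIntegrable_of_Icc hab) fun u hu =>
            log_card_add_mean_log_le_log_sum hs fun i hi => hpos i hi u hu

theorem Real.mul_exp_rpow {c : ℝ} (hc : 0 < c) (x y : ℝ) :
    c * exp x ^ y = exp (log c + x * y) := by
  rw [← exp_mul, exp_add, exp_log hc]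

theorem series_system_GFR_lower_bound
    (n : ℕ) (hn : 0 < n) (r : Fin n → ℝ → ℝ)
    (hc : ∀ i, ContinuousOn (r i) (Set.Ici 0))
    (hpos : ∀ i, ∀ u ∈ Set.Ici (0 : ℝ), 0 < r i u) :
    ∀ t > (0:ℝ),
      (n : ℝ) *
          (∏ i, Real.exp ((1 / t) * ∫ u in (0:ℝ)..t, Real.log (r i u))) ^
            ((1 : ℝ) / n) ≤
        Real.exp ((1 / t) * ∫ u in (0:ℝ)..t, Real.log (∑ i, r i u)) := by
  intro t ht
  have : Nonempty (Fin n) := Fin.pos_iff_nonempty.mp hn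
  have integrated := intervalIntegral.integral_log_card_add_mean_log_le univ_nonempty ht.le
    (fun i _ => (hc i).mono Set.Icc_subset_Ici_self) fun i _ u hu => hpos i u hu.1
  simp only [card_univ, Fintype.card_fin, sub_zero] at integrated
  rw [← exp_sum, mul_exp_rpow (by exact_mod_cast hn), exp_le_exp, ← mul_sum]
  calc log n + (1 / t * ∑ i, ∫ u in (0:ℝ)..t, log (r i u)) * (1 / n)
      = 1 / t * (t * log n + (n : ℝ)⁻¹ * ∑ i, ∫ u in (0:ℝ)..t, log (r i u)) := by
        field_simp
    _ ≤ 1 / t * ∫ u in (0:ℝ)..t, log (∑ i, r i u) := by gcongr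
end

section
/- Let r₁, …, rₙ : [0,∞) → ℝ be continuous and strictly positive (the failure rates of n independent components), and let r = r₁ + ⋯ + rₙ (the failure rate of the series system). Then for every t > 0 the harmonic mean failure rate of the series system satisfies H(r)(t) ≥ n²·(∑_{i=1}^n 1/H(rᵢ)(t))⁻¹, where H(f)(t) = ((1/t)∫₀ᵗ (1/f(u)) du)⁻¹; the right-hand side is n times the discrete harmonic mean of the component harmonic mean failure rates. -/
theorem series_system_HFR_lower_bound
    (n : ℕ) (hn : 0 < n) (r : Fin n → ℝ → ℝ)
    (hc : ∀ i, ContinuousOn (r i) (Set.Ici 0))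
    (hpos : ∀ i, ∀ u ∈ Set.Ici (0 : ℝ), 0 < r i u) :
    ∀ t > (0:ℝ),
      (n : ℝ) ^ 2 *
          (∑ i, (((1 / t) * ∫ u in (0:ℝ)..t, (r i u)⁻¹)⁻¹)⁻¹)⁻¹ ≤
        ((1 / t) * ∫ u in (0:ℝ)..t, (∑ i, r i u)⁻¹)⁻¹ := by
  intro t ht
  have hsub : Set.uIcc (0:ℝ) t ⊆ Set.Ici 0 := by
    rw [Set.uIcc_of_le ht.le]
    exact fun x hx => hx.1
  -- integrability of each (r i)⁻¹
  have hint : ∀ i, IntervalIntegrable (fun u => (r i u)⁻¹) MeasureTheory.volume 0 t := by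
    intro i
    apply ContinuousOn.intervalIntegrable
    apply ContinuousOn.inv₀ ((hc i).mono hsub)
    exact fun x hx => (hpos i x (hsub hx)).ne'
  have hsumpos : ∀ u ∈ Set.Ici (0:ℝ), 0 < ∑ i, r i u := by
    intro u hu
    exact Finset.sum_pos (fun i _ => hpos i u hu) (by simp [Finset.univ_nonempty_iff, Fin.pos_iff_nonempty.mp hn])
  have hcsum : ContinuousOn (fun u => ∑ i, r i u) (Set.Ici 0) :=
    continuousOn_finset_sum _ (fun i _ => hc i)
  have hintA : IntervalIntegrable (fun u => (∑ i, r i u)⁻¹) MeasureTheory.volume 0 t := by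
    apply ContinuousOn.intervalIntegrable
    apply ContinuousOn.inv₀ (hcsum.mono hsub)
    exact fun x hx => (hsumpos x (hsub hx)).ne'
  set A := ∫ u in (0:ℝ)..t, (∑ i, r i u)⁻¹ with hA
  set S := ∑ i, ∫ u in (0:ℝ)..t, (r i u)⁻¹ with hS
  -- rewrite LHS sum
  have hLsum : (∑ i, (((1 / t) * ∫ u in (0:ℝ)..t, (r i u)⁻¹)⁻¹)⁻¹) = (1/t) * S := by
    simp [inv_inv, Finset.mul_sum, hS]
  have hApos : 0 < A := by
    apply intervalIntegral.intervalIntegral_pos_of_pos_on hintA _ ht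
    intro x hx
    exact inv_pos.mpr (hsumpos x (le_of_lt hx.1))
  -- pointwise AM-HM
  have hptw : ∀ u ∈ Set.Icc (0:ℝ) t, (n:ℝ)^2 * (∑ i, r i u)⁻¹ ≤ ∑ i, (r i u)⁻¹ := by
    intro u hu
    have hru : ∀ i, 0 < r i u := fun i => hpos i u hu.1
    have key : ((n:ℝ))^2 ≤ (∑ i, r i u) * (∑ i, (r i u)⁻¹) := by
      have cs := Finset.sum_mul_sq_le_sq_mul_sq Finset.univ
        (fun i => Real.sqrt (r i u)) (fun i => (Real.sqrt (r i u))⁻¹)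
      have e1 : ∀ i : Fin n, Real.sqrt (r i u) * (Real.sqrt (r i u))⁻¹ = 1 := by
        intro i
        exact mul_inv_cancel₀ (Real.sqrt_ne_zero'.mpr (hru i))
      have e2 : ∀ i : Fin n, Real.sqrt (r i u) ^ 2 = r i u := fun i =>
        Real.sq_sqrt (hru i).le
      have e3 : ∀ i : Fin n, ((Real.sqrt (r i u))⁻¹) ^ 2 = (r i u)⁻¹ := by
        intro i
        rw [inv_pow, Real.sq_sqrt (hru i).le]
      simpa [e1, e2, e3] using cs
    have hSpos : 0 < ∑ i, r i u := Finset.sum_pos (fun i _ => hru i) (by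
      simp [Finset.univ_nonempty_iff, Fin.pos_iff_nonempty.mp hn])
    rw [mul_inv_le_iff₀ hSpos, mul_comm]
    exact key
  have hintg : IntervalIntegrable (fun u => ∑ i, (r i u)⁻¹) MeasureTheory.volume 0 t := by
    apply ContinuousOn.intervalIntegrable
    apply continuousOn_finset_sum
    intro i _
    apply ContinuousOn.inv₀ ((hc i).mono hsub)
    exact fun x hx => (hpos i x (hsub hx)).ne'
  have hmono : (n:ℝ)^2 * A ≤ S := by
    have h := intervalIntegral.integral_mono_on ht.le
      (hintA.const_mul ((n:ℝ)^2)) hintg hptw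
    rw [intervalIntegral.integral_const_mul, intervalIntegral.integral_finset_sum
      (f := fun i u => (r i u)⁻¹) (fun i _ => hint i)] at h
    exact h
  have hSpos : 0 < S := lt_of_lt_of_le (by positivity) hmono
  rw [hLsum, mul_inv, mul_inv, one_div, inv_inv]
  have h1 : (n:ℝ)^2 * S⁻¹ ≤ A⁻¹ := by
    rw [← div_eq_mul_inv, ← one_div, div_le_div_iff₀ hSpos hApos]
    linarith [hmono]
  calc (n:ℝ)^2 * (t * S⁻¹) = t * ((n:ℝ)^2 * S⁻¹) := by ring
    _ ≤ t * A⁻¹ := mul_le_mul_of_nonneg_left h1 ht.le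
end

section
/- Let h : [0,∞) → ℝ be continuous and strictly positive, and for s ≥ 0 and t > 0 define GM(t,s) = exp((1/t)∫ₛ^{s+t} ln h(u) du). Then h is monotone non-decreasing (respectively non-increasing) on [0,∞) if and only if for every s ≥ 0 the map t ↦ GM(t,s) is monotone non-decreasing (respectively non-increasing) on (0,∞), i.e., GM(t₂,s) ≥ GM(t₁,s) (respectively ≤) whenever t₂ ≥ t₁ > 0. -/
/-!
Write `M(s, t)` for the mean of `g = log h` over `[s, s + t]`; `exp` and `log` preserve order, so
the claim is that a continuous `g` is monotone iff every `t ↦ M(s, t)` is. The mean over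
`[s, s + t + τ]` is a weighted average of `M(s, t)` and `M(s + t, τ)`, so `M(s, ·)` increases from
`t` to `t + τ` exactly when `M(s, t) ≤ M(s + t, τ)`. For monotone `g` both means are separated by
`g (s + t)`. Conversely, if `M(s, ·)` is monotone then `M(s, t) ≤ M(s + t, τ) → g (s + t)` as
`τ → 0`, while `g s = lim M(s, τ) ≤ M(s, t)`; hence `g s ≤ g (s + t)`. The antitone case is the
monotone one for `-g`.
-/

open Set Filter Topology MeasureTheory

section Composition

variable {α β γ : Type*} [Preorder α] [LinearOrder β] [Preorder γ]
  {φ : β → γ} {f : α → β} {s : Set α} {t : Set β}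

theorem StrictMonoOn.monotoneOn_comp_iff (hφ : StrictMonoOn φ t) (hf : MapsTo f s t) :
    MonotoneOn (φ ∘ f) s ↔ MonotoneOn f s :=
  forall₂_congr fun _ ha => forall₂_congr fun _ hb => imp_congr_right fun _ =>
    hφ.le_iff_le (hf ha) (hf hb)

theorem StrictMonoOn.antitoneOn_comp_iff (hφ : StrictMonoOn φ t) (hf : MapsTo f s t) :
    AntitoneOn (φ ∘ f) s ↔ AntitoneOn f s :=
  forall₂_congr fun _ ha => forall₂_congr fun _ hb => imp_congr_right fun _ =>
    hφ.le_iff_le (hf hb) (hf ha)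

end Composition

theorem monotoneOn_neg_iff {α β : Type*} [Preorder α] [AddCommGroup β] [PartialOrder β]
    [IsOrderedAddMonoid β] {f : α → β} {s : Set α} :
    MonotoneOn (-f) s ↔ AntitoneOn f s :=
  forall₂_congr fun _ _ => forall₂_congr fun _ _ => imp_congr_right fun _ => neg_le_neg_iff

/-- The paper's `GM(t, s)` is `Real.exp (intervalMean (Real.log ∘ h) s t)`. -/
noncomputable def intervalMean (g : ℝ → ℝ) (s t : ℝ) : ℝ :=
  (1 / t) * ∫ u in s..(s + t), g u

section IntervalMean

variable {g : ℝ → ℝ} {s t τ : ℝ}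

theorem intervalMean_eq_div : intervalMean g s t = (∫ u in s..(s + t), g u) / t :=
  one_div_mul_eq_div _ _

theorem intervalMean_neg : intervalMean (-g) s = -intervalMean g s := by
  ext t
  simp only [intervalMean, Pi.neg_apply, intervalIntegral.integral_neg, mul_neg]

theorem intervalMean_le_intervalMean_add_iff (ht : 0 < t) (hτ : 0 < τ)
    (h₁ : IntervalIntegrable g volume s (s + t))
    (h₂ : IntervalIntegrable g volume (s + t) (s + t + τ)) :
    intervalMean g s t ≤ intervalMean g s (t + τ) ↔
      intervalMean g s t ≤ intervalMean g (s + t) τ := by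
  have hsplit : (t + τ) * intervalMean g s (t + τ) =
      t * intervalMean g s t + τ * intervalMean g (s + t) τ := by
    simp only [intervalMean_eq_div, mul_div_cancel₀ _ ht.ne', mul_div_cancel₀ _ hτ.ne',
      mul_div_cancel₀ _ (add_pos ht hτ).ne', ← add_assoc]
    exact (intervalIntegral.integral_add_adjacent_intervals h₁ h₂).symm
  have key : (t + τ) * (intervalMean g s (t + τ) - intervalMean g s t) =
      τ * (intervalMean g (s + t) τ - intervalMean g s t) := by
    linear_combination hsplit
  rw [← sub_nonneg, ← sub_nonneg (b := intervalMean g s t),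
    ← mul_nonneg_iff_of_pos_left (add_pos ht hτ), key, mul_nonneg_iff_of_pos_left hτ]

theorem le_intervalMean_of_monotoneOn (hg : MonotoneOn g (Icc s (s + t))) (ht : 0 < t) :
    g s ≤ intervalMean g s t := by
  have hst : s ≤ s + t := by linarith
  rw [intervalMean_eq_div, le_div_iff₀ ht]
  have := intervalIntegral.integral_mono_on (μ := volume) hst intervalIntegrable_const
    (hg.mono (uIcc_of_le hst).subset).intervalIntegrable
    fun u hu => hg (left_mem_Icc.2 hst) hu hu.1
  simpa [mul_comm] using this

theorem intervalMean_le_of_monotoneOn (hg : MonotoneOn g (Icc s (s + t))) (ht : 0 < t) :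
    intervalMean g s t ≤ g (s + t) := by
  have hst : s ≤ s + t := by linarith
  rw [intervalMean_eq_div, div_le_iff₀ ht]
  have := intervalIntegral.integral_mono_on (μ := volume) hst
    (hg.mono (uIcc_of_le hst).subset).intervalIntegrable intervalIntegrable_const
    fun u hu => hg hu (right_mem_Icc.2 hst) hu.2
  simpa [mul_comm] using this

theorem tendsto_intervalMean (hg : ContinuousOn g (Ici s)) :
    Tendsto (intervalMean g s) (𝓝[>] 0) (𝓝 (g s)) := by
  have hderiv : HasDerivWithinAt (fun u => ∫ x in s..u, g x) (g s) (Ici s) s :=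
    intervalIntegral.integral_hasDerivWithinAt_right IntervalIntegrable.refl
      ((hg.mono Ioi_subset_Ici_self).stronglyMeasurableAtFilter_nhdsWithin measurableSet_Ioi s)
      ((hg s self_mem_Ici).mono Ioi_subset_Ici_self)
  have hslope := (hasDerivWithinAt_iff_tendsto_slope' self_notMem_Ioi).1
    (hderiv.mono Ioi_subset_Ici_self)
  have hshift : Tendsto (fun τ => s + τ) (𝓝[>] 0) (𝓝[>] s) :=
    (map_add_left_nhdsGT (c := s) (a := 0)).trans_le (by rw [add_zero])
  refine (hslope.comp hshift).congr fun τ => ?_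
  simp [slope_def_field, intervalMean_eq_div]

theorem monotoneOn_intervalMean_of_monotoneOn (hg : MonotoneOn g (Ici s)) :
    MonotoneOn (intervalMean g s) (Ioi 0) := by
  refine monotoneOn_iff_forall_lt.2 fun t (ht : 0 < t) t' _ htt' => ?_
  obtain ⟨τ, hτ, rfl⟩ : ∃ τ, 0 < τ ∧ t' = t + τ := ⟨t' - t, by linarith, by ring⟩
  have hmono : ∀ a ≥ s, ∀ b, MonotoneOn g (Icc a b) := fun a ha b =>
    hg.mono fun u hu => le_trans ha hu.1
  have hint : ∀ a ≥ s, ∀ b, a ≤ b → IntervalIntegrable g volume a b := fun a ha b hab =>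
    ((hmono a ha b).mono (uIcc_of_le hab).subset).intervalIntegrable
  rw [intervalMean_le_intervalMean_add_iff ht hτ (hint s le_rfl _ (by linarith))
    (hint (s + t) (by linarith) _ (by linarith))]
  exact (intervalMean_le_of_monotoneOn (hmono s le_rfl _) ht).trans
    (le_intervalMean_of_monotoneOn (hmono (s + t) (by linarith) _) hτ)

theorem le_intervalMean_le_of_monotoneOn_intervalMean (hg : ContinuousOn g (Ici s))
    (hmean : MonotoneOn (intervalMean g s) (Ioi 0)) (ht : 0 < t) :
    g s ≤ intervalMean g s t ∧ intervalMean g s t ≤ g (s + t) := by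
  have hint : ∀ a ≥ s, ∀ b, a ≤ b → IntervalIntegrable g volume a b := fun a ha b hab =>
    (hg.mono fun u hu => ha.trans ((uIcc_of_le hab) ▸ hu).1).intervalIntegrable
  constructor
  · refine le_of_tendsto (tendsto_intervalMean hg) ?_
    filter_upwards [Ioo_mem_nhdsGT ht] with τ hτ
    exact hmean hτ.1 ht hτ.2.le
  · refine ge_of_tendsto (tendsto_intervalMean (hg.mono (Ici_subset_Ici.2 (by linarith)))) ?_
    filter_upwards [self_mem_nhdsWithin] with τ (hτ : 0 < τ)
    refine (intervalMean_le_intervalMean_add_iff ht hτ (hint s le_rfl _ (by linarith))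
      (hint (s + t) (by linarith) _ (by linarith))).1 ?_
    exact hmean ht (add_pos ht hτ) (by linarith)

end IntervalMean

theorem monotoneOn_Ici_iff_forall_monotoneOn_intervalMean {g : ℝ → ℝ} {a : ℝ}
    (hg : ContinuousOn g (Ici a)) :
    MonotoneOn g (Ici a) ↔ ∀ s ≥ a, MonotoneOn (intervalMean g s) (Ioi 0) := by
  refine ⟨fun hmono s hs => monotoneOn_intervalMean_of_monotoneOn
    (hmono.mono (Ici_subset_Ici.2 hs)), fun hmean => ?_⟩
  refine monotoneOn_iff_forall_lt.2 fun x (hx : a ≤ x) y _ hxy => ?_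
  have hbounds := le_intervalMean_le_of_monotoneOn_intervalMean
    (hg.mono (Ici_subset_Ici.2 hx)) (hmean x hx) (sub_pos.2 hxy)
  rw [add_sub_cancel] at hbounds
  exact hbounds.1.trans hbounds.2

theorem antitoneOn_Ici_iff_forall_antitoneOn_intervalMean {g : ℝ → ℝ} {a : ℝ}
    (hg : ContinuousOn g (Ici a)) :
    AntitoneOn g (Ici a) ↔ ∀ s ≥ a, AntitoneOn (intervalMean g s) (Ioi 0) := by
  simp only [← monotoneOn_neg_iff, ← intervalMean_neg]
  exact monotoneOn_Ici_iff_forall_monotoneOn_intervalMean hg.neg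

theorem IFR_iff_GM_monotone_in_t
    (h : ℝ → ℝ) (hc : ContinuousOn h (Set.Ici 0))
    (hpos : ∀ u ∈ Set.Ici (0 : ℝ), 0 < h u) :
    (MonotoneOn h (Set.Ici 0) ↔
      ∀ s ≥ (0:ℝ),
        MonotoneOn
          (fun t => Real.exp ((1 / t) * ∫ u in s..(s + t), Real.log (h u)))
          (Set.Ioi 0)) ∧
    (AntitoneOn h (Set.Ici 0) ↔
      ∀ s ≥ (0:ℝ),
        AntitoneOn
          (fun t => Real.exp ((1 / t) * ∫ u in s..(s + t), Real.log (h u)))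
          (Set.Ioi 0)) := by
  have hlog : ContinuousOn (Real.log ∘ h) (Ici 0) := hc.log fun u hu => (hpos u hu).ne'
  have hexp : StrictMonoOn Real.exp univ := Real.exp_strictMono.strictMonoOn _
  constructor
  · rw [← Real.strictMonoOn_log.monotoneOn_comp_iff hpos,
      monotoneOn_Ici_iff_forall_monotoneOn_intervalMean hlog]
    exact forall₂_congr fun s _ => (hexp.monotoneOn_comp_iff (mapsTo_univ _ _)).symm
  · rw [← Real.strictMonoOn_log.antitoneOn_comp_iff hpos,
      antitoneOn_Ici_iff_forall_antitoneOn_intervalMean hlog]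
    exact forall₂_congr fun s _ => (hexp.antitoneOn_comp_iff (mapsTo_univ _ _)).symm
end

section
/- Let h : [0,∞) → ℝ be continuous and strictly positive, and for s ≥ 0 and t > 0 define HM(t,s) = ((1/t)∫ₛ^{s+t} (1/h(u)) du)⁻¹. Then h is monotone non-decreasing (respectively non-increasing) on [0,∞) if and only if for every s ≥ 0 the map t ↦ HM(t,s) is monotone non-decreasing (respectively non-increasing) on (0,∞), i.e., HM(t₂,s) ≥ HM(t₁,s) (respectively ≤) whenever t₂ ≥ t₁ > 0. -/
/-!
Put `g = 1 / h`; then `HM(t, s)⁻¹` is the mean of `g` over `[s, s + t]`, and `h` is IFR (DFR)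
iff `g` is antitone (monotone). So it suffices that a continuous `g` is monotone iff all its
forward means are monotone in the length `t`. Writing the mean as `∫₀¹ g (t x + s) dx` gives
one direction. Conversely the mean tends to `g s` as `t → 0⁺`, so monotone means dominate
`g s`; if `g y < g x` with `x < y`, the last point `a` of `[x, y]` with `g x ≤ g a` violates
this for the window `[a, y]`. The antitone case follows by passing to `-g`.
-/

open Set Filter Topology MeasureTheory

/-- `HM(t, s) = (forwardAverage h⁻¹ s t)⁻¹`. -/
noncomputable def forwardAverage (g : ℝ → ℝ) (s t : ℝ) : ℝ :=
  (1 / t) * ∫ u in s..(s + t), g u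

lemma forwardAverage_eq_integral_comp (g : ℝ → ℝ) (s : ℝ) {t : ℝ} (ht : t ≠ 0) :
    forwardAverage g s t = ∫ x in (0 : ℝ)..1, g (t * x + s) := by
  rw [intervalIntegral.integral_comp_mul_add _ ht, forwardAverage]
  simp [add_comm]

lemma forwardAverage_neg (g : ℝ → ℝ) (s : ℝ) :
    forwardAverage (-g) s = -forwardAverage g s := by
  ext t
  simp [forwardAverage, intervalIntegral.integral_neg]

lemma forwardAverage_pos {g : ℝ → ℝ} {s t : ℝ} (hg : ContinuousOn g (Ici s))
    (hpos : ∀ u ∈ Ici s, 0 < g u) (ht : 0 < t) : 0 < forwardAverage g s t := by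
  have hint : 0 < ∫ u in s..(s + t), g u :=
    intervalIntegral.intervalIntegral_pos_of_pos_on
      ((hg.mono Icc_subset_Ici_self).intervalIntegrable_of_Icc (by linarith))
      (fun u hu => hpos u hu.1.le) (by linarith)
  rw [forwardAverage]
  positivity

lemma MonotoneOn.forwardAverage {g : ℝ → ℝ} {s : ℝ} (hg : ContinuousOn g (Ici s))
    (hmono : MonotoneOn g (Ici s)) : MonotoneOn (forwardAverage g s) (Ioi 0) := by
  intro t₁ ht₁ t₂ ht₂ h12
  have hmem : ∀ {t x : ℝ}, 0 ≤ t → x ∈ Icc (0 : ℝ) 1 → t * x + s ∈ Ici s := fun ht hx => by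
    simp only [mem_Ici, le_add_iff_nonneg_left]
    exact mul_nonneg ht hx.1
  have hint : ∀ {t : ℝ}, 0 ≤ t → IntervalIntegrable (fun x => g (t * x + s)) volume 0 1 :=
    fun ht => (hg.comp (by fun_prop) fun _ hx => hmem ht hx).intervalIntegrable_of_Icc zero_le_one
  rw [forwardAverage_eq_integral_comp g s (ne_of_gt ht₁),
    forwardAverage_eq_integral_comp g s (ne_of_gt ht₂)]
  refine intervalIntegral.integral_mono_on zero_le_one (hint (le_of_lt ht₁))
    (hint (le_of_lt ht₂)) fun x hx => hmono (hmem (le_of_lt ht₁) hx) (hmem (le_of_lt ht₂) hx) ?_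
  gcongr
  exact hx.1

lemma tendsto_forwardAverage {g : ℝ → ℝ} {s : ℝ} (hg : ContinuousOn g (Ici s)) :
    Tendsto (forwardAverage g s) (𝓝[>] 0) (𝓝 (g s)) := by
  have hderiv : HasDerivWithinAt (fun u => ∫ x in s..u, g x) (g s) (Ioi s) s :=
    (intervalIntegral.integral_hasDerivWithinAt_right (by simp)
      ((hg.mono Ioi_subset_Ici_self).stronglyMeasurableAtFilter_nhdsWithin measurableSet_Ioi s)
      ((hg s self_mem_Ici).mono Ioi_subset_Ici_self)).Ioi_of_Ici
  have hshift : Tendsto (fun t => s + t) (𝓝[>] 0) (𝓝[>] s) :=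
    tendsto_nhdsWithin_iff.2 ⟨((continuous_const_add s).tendsto' 0 s (add_zero s)).mono_left
      nhdsWithin_le_nhds, eventually_nhdsWithin_of_forall fun _ ht => lt_add_of_pos_right s ht⟩
  refine ((hasDerivWithinAt_iff_tendsto_slope' (lt_irrefl s)).1 hderiv |>.comp hshift).congr
    fun t => ?_
  simp [slope_def_field, forwardAverage, div_eq_inv_mul]

lemma le_forwardAverage_of_monotoneOn {g : ℝ → ℝ} {s t : ℝ} (hg : ContinuousOn g (Ici s))
    (hmono : MonotoneOn (forwardAverage g s) (Ioi 0)) (ht : 0 < t) :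
    g s ≤ forwardAverage g s t :=
  le_of_tendsto (tendsto_forwardAverage hg) <| mem_of_superset (Ioc_mem_nhdsGT ht)
    fun _ ht' => hmono ht'.1 ht ht'.2

lemma le_of_forall_mul_le_integral {g : ℝ → ℝ} {x y : ℝ} (hxy : x ≤ y)
    (hg : ContinuousOn g (Icc x y)) (h : ∀ s ∈ Ico x y, (y - s) * g s ≤ ∫ u in s..y, g u) :
    g x ≤ g y := by
  by_contra! hyx
  -- The last point `a` of `[x, y]` with `g x ≤ g a` has `g < g a` on `(a, y]`.
  obtain ⟨a, ⟨haxy, hxa : g x ≤ g a⟩, hlast⟩ : ∃ a, IsGreatest (Icc x y ∩ g ⁻¹' Ici (g x)) a :=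
    (isCompact_Icc.of_isClosed_subset (hg.preimage_isClosed_of_isClosed isClosed_Icc isClosed_Ici)
      inter_subset_left).exists_isGreatest ⟨x, left_mem_Icc.2 hxy, le_refl (g x)⟩
  have hay : a < y := haxy.2.lt_of_ne (by rintro rfl; exact hyx.not_ge hxa)
  have hlt : ∀ u ∈ Ioc a y, g u < g a := fun u hu =>
    (lt_of_not_ge fun hxu => hu.1.not_ge (hlast ⟨⟨haxy.1.trans hu.1.le, hu.2⟩, hxu⟩)).trans_le hxa
  have hint : ∫ u in a..y, g u < ∫ _ in a..y, g a :=
    intervalIntegral.integral_lt_integral_of_continuousOn_of_le_of_exists_lt hay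
      (hg.mono (Icc_subset_Icc_left haxy.1)) continuousOn_const (fun u hu => (hlt u hu).le)
      ⟨y, right_mem_Icc.2 hay.le, hlt y ⟨hay, le_rfl⟩⟩
  rw [intervalIntegral.integral_const, smul_eq_mul] at hint
  exact (h a ⟨haxy.1, hay⟩).not_gt hint

lemma monotoneOn_of_forall_le_forwardAverage {g : ℝ → ℝ} {a : ℝ} (hg : ContinuousOn g (Ici a))
    (h : ∀ s ∈ Ici a, ∀ t > 0, g s ≤ forwardAverage g s t) : MonotoneOn g (Ici a) := by
  refine fun x hx y _ hxy => le_of_forall_mul_le_integral hxy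
    (hg.mono fun u hu => hx.trans hu.1) fun s hs => ?_
  have hys : 0 < y - s := sub_pos.2 hs.2
  have := h s (hx.trans hs.1) (y - s) hys
  rwa [forwardAverage, add_sub_cancel, one_div, le_inv_mul_iff₀ hys] at this

theorem monotoneOn_iff_forall_monotoneOn_forwardAverage {g : ℝ → ℝ} {a : ℝ}
    (hg : ContinuousOn g (Ici a)) :
    MonotoneOn g (Ici a) ↔ ∀ s ≥ a, MonotoneOn (forwardAverage g s) (Ioi 0) := by
  refine ⟨fun hmono s hs => ?_, fun H => monotoneOn_of_forall_le_forwardAverage hg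
    fun s hs _ ht => le_forwardAverage_of_monotoneOn (hg.mono (Ici_subset_Ici.2 hs)) (H s hs) ht⟩
  exact (hmono.mono (Ici_subset_Ici.2 hs)).forwardAverage (hg.mono (Ici_subset_Ici.2 hs))

theorem antitoneOn_iff_forall_antitoneOn_forwardAverage {g : ℝ → ℝ} {a : ℝ}
    (hg : ContinuousOn g (Ici a)) :
    AntitoneOn g (Ici a) ↔ ∀ s ≥ a, AntitoneOn (forwardAverage g s) (Ioi 0) := by
  have neg_iff {f : ℝ → ℝ} {S : Set ℝ} : MonotoneOn (-f) S ↔ AntitoneOn f S :=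
    ⟨fun h => by simpa using h.neg, AntitoneOn.neg⟩
  rw [← neg_iff, monotoneOn_iff_forall_monotoneOn_forwardAverage hg.neg]
  simp only [forwardAverage_neg, neg_iff]

section inv

variable {α K : Type*} [Preorder α] [Field K] [LinearOrder K] [IsStrictOrderedRing K]
  {f : α → K} {S : Set α}

lemma monotoneOn_inv_iff (hf : ∀ x ∈ S, 0 < f x) : MonotoneOn f⁻¹ S ↔ AntitoneOn f S :=
  forall₂_congr fun _ hx => forall₂_congr fun _ hy => imp_congr_right fun _ =>
    inv_le_inv₀ (hf _ hx) (hf _ hy)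

lemma antitoneOn_inv_iff (hf : ∀ x ∈ S, 0 < f x) : AntitoneOn f⁻¹ S ↔ MonotoneOn f S :=
  forall₂_congr fun _ hx => forall₂_congr fun _ hy => imp_congr_right fun _ =>
    inv_le_inv₀ (hf _ hy) (hf _ hx)

end inv

theorem IFR_iff_HM_monotone_in_t
    (h : ℝ → ℝ) (hc : ContinuousOn h (Set.Ici 0))
    (hpos : ∀ u ∈ Set.Ici (0 : ℝ), 0 < h u) :
    (MonotoneOn h (Set.Ici 0) ↔
      ∀ s ≥ (0:ℝ),
        MonotoneOn
          (fun t => ((1 / t) * ∫ u in s..(s + t), (h u)⁻¹)⁻¹)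
          (Set.Ioi 0)) ∧
    (AntitoneOn h (Set.Ici 0) ↔
      ∀ s ≥ (0:ℝ),
        AntitoneOn
          (fun t => ((1 / t) * ∫ u in s..(s + t), (h u)⁻¹)⁻¹)
          (Set.Ioi 0)) := by
  have hg : ContinuousOn h⁻¹ (Ici 0) := hc.inv₀ fun u hu => (hpos u hu).ne'
  have havg_pos : ∀ s ≥ (0 : ℝ), ∀ t ∈ Ioi (0 : ℝ), 0 < forwardAverage h⁻¹ s t :=
    fun s hs _ ht => forwardAverage_pos (hg.mono (Ici_subset_Ici.2 hs))
      (fun u hu => inv_pos.2 (hpos u (hs.trans hu))) ht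
  change (_ ↔ ∀ s ≥ (0 : ℝ), MonotoneOn (forwardAverage h⁻¹ s)⁻¹ (Ioi 0)) ∧
    (_ ↔ ∀ s ≥ (0 : ℝ), AntitoneOn (forwardAverage h⁻¹ s)⁻¹ (Ioi 0))
  rw [← antitoneOn_inv_iff hpos, ← monotoneOn_inv_iff hpos,
    antitoneOn_iff_forall_antitoneOn_forwardAverage hg,
    monotoneOn_iff_forall_monotoneOn_forwardAverage hg]
  exact ⟨forall₂_congr fun s hs => (monotoneOn_inv_iff (havg_pos s hs)).symm,
    forall₂_congr fun s hs => (antitoneOn_inv_iff (havg_pos s hs)).symm⟩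
end

section
/- Let r_X, r_Y : [0,∞) → ℝ be strictly positive and continuously differentiable failure rates, and suppose their geometric aging intensities coincide: r_X(t)/exp((1/t)∫₀ᵗ ln r_X(u) du) = r_Y(t)/exp((1/t)∫₀ᵗ ln r_Y(u) du) for all t > 0. Then r_X and r_Y are proportional: there exists a constant c > 0 such that r_Y(t) = c·r_X(t) for all t > 0. -/
open Set Real intervalIntegral

theorem equal_GAI_implies_proportional_failure_rates
    (rX rY : ℝ → ℝ)
    (hX : ContDiffOn ℝ 1 rX (Set.Ici 0)) (hY : ContDiffOn ℝ 1 rY (Set.Ici 0))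
    (hXpos : ∀ u ∈ Set.Ici (0 : ℝ), 0 < rX u)
    (hYpos : ∀ u ∈ Set.Ici (0 : ℝ), 0 < rY u)
    (heq : ∀ t > (0:ℝ),
      rX t / Real.exp ((1 / t) * ∫ u in (0:ℝ)..t, Real.log (rX u)) =
        rY t / Real.exp ((1 / t) * ∫ u in (0:ℝ)..t, Real.log (rY u))) :
    ∃ c > (0:ℝ), ∀ t > (0:ℝ), rY t = c * rX t := by
  set f : ℝ → ℝ := fun u => Real.log (rY u) - Real.log (rX u) with hf
  have hcontX : ContinuousOn (fun u => Real.log (rX u)) (Set.Ici 0) :=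
    fun x hx => ((Real.continuousAt_log (hXpos x hx).ne').comp_continuousWithinAt
      ((hX.continuousOn x hx)))
  have hcontY : ContinuousOn (fun u => Real.log (rY u)) (Set.Ici 0) :=
    fun x hx => ((Real.continuousAt_log (hYpos x hx).ne').comp_continuousWithinAt
      ((hY.continuousOn x hx)))
  have hcontf : ContinuousOn f (Set.Ici 0) := hcontY.sub hcontX
  have hsub : ∀ t : ℝ, 0 < t → Set.uIcc (0:ℝ) t ⊆ Set.Ici 0 := by
    intro t ht
    rw [Set.uIcc_of_le ht.le]
    exact Set.Icc_subset_Ici_self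
  have hintX : ∀ t : ℝ, 0 < t →
      IntervalIntegrable (fun u => Real.log (rX u)) MeasureTheory.volume 0 t :=
    fun t ht => (hcontX.mono (hsub t ht)).intervalIntegrable
  have hintY : ∀ t : ℝ, 0 < t →
      IntervalIntegrable (fun u => Real.log (rY u)) MeasureTheory.volume 0 t :=
    fun t ht => (hcontY.mono (hsub t ht)).intervalIntegrable
  set F : ℝ → ℝ := fun t => ∫ u in (0:ℝ)..t, f u with hFdef
  -- key identity : t * f t = F t
  have key : ∀ t : ℝ, 0 < t → t * f t = F t := by
    intro t ht
    have h1 := heq t ht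
    have hx := hXpos t (le_of_lt ht)
    have hy := hYpos t (le_of_lt ht)
    have h2 : Real.log (rX t) - (1 / t) * ∫ u in (0:ℝ)..t, Real.log (rX u) =
        Real.log (rY t) - (1 / t) * ∫ u in (0:ℝ)..t, Real.log (rY u) := by
      have := congrArg Real.log h1
      rwa [Real.log_div hx.ne' (Real.exp_ne_zero _),
        Real.log_div hy.ne' (Real.exp_ne_zero _), Real.log_exp, Real.log_exp] at this
    have hFt : F t = (∫ u in (0:ℝ)..t, Real.log (rY u)) -
        ∫ u in (0:ℝ)..t, Real.log (rX u) := by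
      simp only [hFdef, hf]
      rw [intervalIntegral.integral_sub (hintY t ht) (hintX t ht)]
    rw [hFt]
    have := sub_eq_sub_iff_sub_eq_sub.mp h2
    simp only [hf]
    field_simp at this
    linear_combination -this
  -- F has derivative f t at every t > 0
  have hderF : ∀ t : ℝ, 0 < t → HasDerivAt F (f t) t := by
    intro t ht
    have hIci : Set.Ici (0:ℝ) ∈ nhds t := Ici_mem_nhds ht
    have hct : ContinuousAt f t := hcontf.continuousAt hIci
    exact intervalIntegral.integral_hasDerivAt_right
      ((hintY t ht).sub (hintX t ht))
      (ContinuousOn.stronglyMeasurableAtFilter isOpen_Ioi (hcontf.mono Set.Ioi_subset_Ici_self)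
        t ht) hct
  -- the function F t / t has zero derivative on (0, ∞)
  have hder0 : ∀ t ∈ Set.Ioi (0:ℝ), HasDerivAt (fun s => F s / s) 0 t := by
    intro t ht
    have ht' : (0:ℝ) < t := ht
    have hd := (hderF t ht').div (hasDerivAt_id t) ht'.ne'
    simp only [id] at hd
    have h0 : (f t * t - F t * 1) / t ^ 2 = 0 := by
      rw [mul_comm (f t) t, key t ht']; ring
    rwa [h0] at hd
  have hopen : IsOpen (Set.Ioi (0:ℝ)) := isOpen_Ioi
  have hconst : ∀ t ∈ Set.Ioi (0:ℝ), F t / t = F 1 / 1 := by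
    intro t ht
    refine (convex_Ioi (0:ℝ)).is_const_of_fderivWithin_eq_zero
      (fun x hx => ((hder0 x hx).differentiableAt).differentiableWithinAt)
      (fun x hx => ?_) ht (by norm_num : (1:ℝ) ∈ Set.Ioi 0)
    rw [fderivWithin_of_isOpen hopen hx]
    rw [(hder0 x hx).hasFDerivAt.fderiv]
    ext; simp
  -- hence f is constant on (0, ∞)
  have hfconst : ∀ t : ℝ, 0 < t → f t = F 1 := by
    intro t ht
    have := hconst t ht
    have h2 := key t ht
    field_simp at this
    nlinarith
  refine ⟨Real.exp (F 1), Real.exp_pos _, fun t ht => ?_⟩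
  have hx := hXpos t ht.le
  have hy := hYpos t ht.le
  have : Real.log (rY t) = F 1 + Real.log (rX t) := by
    have := hfconst t ht
    simp only [hf] at this
    linarith
  calc rY t = Real.exp (Real.log (rY t)) := (Real.exp_log hy).symm
    _ = Real.exp (F 1) * rX t := by rw [this, Real.exp_add, Real.exp_log hx]
end

section
/- Let r_X, r_Y : [0,∞) → ℝ be strictly positive and continuously differentiable failure rates, and suppose their harmonic aging intensities coincide: r_X(t)·∫₀ᵗ (1/r_X(u)) du = r_Y(t)·∫₀ᵗ (1/r_Y(u)) du for all t > 0. Then r_X and r_Y are proportional: there exists a constant c > 0 such that r_Y(t) = c·r_X(t) for all t > 0. -/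
open Set intervalIntegral

theorem equal_HAI_implies_proportional_failure_rates
    (rX rY : ℝ → ℝ)
    (hX : ContDiffOn ℝ 1 rX (Set.Ici 0)) (hY : ContDiffOn ℝ 1 rY (Set.Ici 0))
    (hXpos : ∀ u ∈ Set.Ici (0 : ℝ), 0 < rX u)
    (hYpos : ∀ u ∈ Set.Ici (0 : ℝ), 0 < rY u)
    (heq : ∀ t > (0:ℝ),
      rX t * ∫ u in (0:ℝ)..t, (rX u)⁻¹ =
        rY t * ∫ u in (0:ℝ)..t, (rY u)⁻¹) :
    ∃ c > (0:ℝ), ∀ t > (0:ℝ), rY t = c * rX t := by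
  set F : ℝ → ℝ := fun t => ∫ u in (0:ℝ)..t, (rX u)⁻¹ with hF
  set G : ℝ → ℝ := fun t => ∫ u in (0:ℝ)..t, (rY u)⁻¹ with hG
  have hXc : ContinuousOn (fun u => (rX u)⁻¹) (Ici 0) :=
    hX.continuousOn.inv₀ fun u hu => (hXpos u hu).ne'
  have hYc : ContinuousOn (fun u => (rY u)⁻¹) (Ici 0) :=
    hY.continuousOn.inv₀ fun u hu => (hYpos u hu).ne'
  have hXint : ∀ t : ℝ, 0 ≤ t → IntervalIntegrable (fun u => (rX u)⁻¹) MeasureTheory.volume 0 t := by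
    intro t ht
    exact (hXc.mono (by rw [uIcc_of_le ht]; exact Icc_subset_Ici_self)).intervalIntegrable
  have hYint : ∀ t : ℝ, 0 ≤ t → IntervalIntegrable (fun u => (rY u)⁻¹) MeasureTheory.volume 0 t := by
    intro t ht
    exact (hYc.mono (by rw [uIcc_of_le ht]; exact Icc_subset_Ici_self)).intervalIntegrable
  have hFd : ∀ t : ℝ, 0 < t → HasDerivAt F (rX t)⁻¹ t := by
    intro t ht
    exact intervalIntegral.integral_hasDerivAt_right (hXint t ht.le)
      ⟨Ici 0, Ici_mem_nhds ht, hXc.aestronglyMeasurable measurableSet_Ici⟩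
      (hXc.continuousAt (Ici_mem_nhds ht))
  have hGd : ∀ t : ℝ, 0 < t → HasDerivAt G (rY t)⁻¹ t := by
    intro t ht
    exact intervalIntegral.integral_hasDerivAt_right (hYint t ht.le)
      ⟨Ici 0, Ici_mem_nhds ht, hYc.aestronglyMeasurable measurableSet_Ici⟩
      (hYc.continuousAt (Ici_mem_nhds ht))
  have hFpos : ∀ t : ℝ, 0 < t → 0 < F t := by
    intro t ht
    exact intervalIntegral.intervalIntegral_pos_of_pos_on (hXint t ht.le)
      (fun x hx => inv_pos.2 (hXpos x (le_of_lt hx.1))) ht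
  have hGpos : ∀ t : ℝ, 0 < t → 0 < G t := by
    intro t ht
    exact intervalIntegral.intervalIntegral_pos_of_pos_on (hYint t ht.le)
      (fun x hx => inv_pos.2 (hYpos x (le_of_lt hx.1))) ht
  -- φ = F / G has zero derivative on Ioi 0
  have hφd : ∀ t ∈ Ioi (0:ℝ), HasDerivAt (fun t => F t / G t) 0 t := by
    intro t ht
    have ht : (0:ℝ) < t := ht
    have h := (hFd t ht).div (hGd t ht) (hGpos t ht).ne'
    have hk : rX t * F t = rY t * G t := heq t ht
    have hx := (hXpos t (le_of_lt ht)).ne'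
    have hy := (hYpos t (le_of_lt ht)).ne'
    have hnum : ((rX t)⁻¹ * G t - F t * (rY t)⁻¹) / (G t) ^ 2 = 0 := by
      rw [div_eq_zero_iff]
      left
      rw [sub_eq_zero]
      field_simp
      linarith [hk]
    rwa [hnum] at h
  have hconst : ∀ t : ℝ, 0 < t → F t / G t = F 1 / G 1 := by
    intro t ht
    exact (convex_Ioi (0:ℝ)).is_const_of_fderivWithin_eq_zero
      (fun x hx => ((hφd x hx).differentiableAt.differentiableWithinAt))
      (fun x hx => by
        rw [fderivWithin_of_isOpen isOpen_Ioi hx, (hφd x hx).hasFDerivAt.fderiv]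
        ext; simp)
      ht (by norm_num : (1:ℝ) ∈ Ioi (0:ℝ))
  refine ⟨F 1 / G 1, div_pos (hFpos 1 one_pos) (hGpos 1 one_pos), ?_⟩
  intro t ht
  -- ψ t = F t * G 1 - G t * F 1 is zero on Ioi 0
  have hψ0 : ∀ x ∈ Ioi (0:ℝ), F x * G 1 - G x * F 1 = 0 := by
    intro x hx
    have := hconst x hx
    have hGx := (hGpos x hx).ne'
    have hG1 := (hGpos 1 one_pos).ne'
    field_simp at this
    linarith [this]
  have hψd : HasDerivAt (fun x => F x * G 1 - G x * F 1)
      ((rX t)⁻¹ * G 1 - (rY t)⁻¹ * F 1) t :=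
    ((hFd t ht).mul_const _).sub ((hGd t ht).mul_const _)
  have hψd0 : HasDerivAt (fun x => F x * G 1 - G x * F 1) 0 t := by
    refine (hasDerivAt_const t (0:ℝ)).congr_of_eventuallyEq ?_
    filter_upwards [Ioi_mem_nhds ht] with x hx
    exact hψ0 x hx
  have hkey : (rX t)⁻¹ * G 1 - (rY t)⁻¹ * F 1 = 0 := hψd.unique hψd0
  have hx := (hXpos t (le_of_lt ht)).ne'
  have hy := (hYpos t (le_of_lt ht)).ne'
  have hG1 := (hGpos 1 one_pos).ne'
  field_simp at hkey ⊢
  linarith [hkey]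
end

section
/- Let r_X, r_Y : [0,∞) → ℝ be continuous and strictly positive failure rates. (i) The geometric aging intensity order X ≤_GAI Y (i.e., r_X(t)/exp((1/t)∫₀ᵗ ln r_X) ≥ r_Y(t)/exp((1/t)∫₀ᵗ ln r_Y) for all t > 0) holds if and only if ln(r_X(t)/r_Y(t)) ≥ (1/t)∫₀ᵗ ln(r_X(u)/r_Y(u)) du for all t > 0. (ii) If t ↦ ln(r_X(t)/r_Y(t)) is monotone non-decreasing on (0,∞) (in particular, if X is aging faster than Y, i.e., t ↦ r_X(t)/r_Y(t) is non-decreasing), then X ≤_GAI Y. -/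
/-! Taking logarithms, `L^G_Y(t) ≤ L^G_X(t)` says `ln r_Y(t) - A_Y(t) ≤ ln r_X(t) - A_X(t)`, where
`A(t)` is the running average of `ln r`; since the average is linear, this is the comparison of
`ln (r_X / r_Y)` with its own running average. A function that is non-decreasing on `(0, t]`
dominates its average there by its value at `t`. -/

open Real Set

noncomputable def geometricAgingIntensity (r : ℝ → ℝ) (t : ℝ) : ℝ :=
  r t / exp ((1 / t) * ∫ u in (0 : ℝ)..t, log (r u))

lemma intervalIntegrable_log_of_continuousOn {f : ℝ → ℝ} {a b : ℝ}
    (hf : ContinuousOn f (uIcc a b)) (hpos : ∀ u ∈ uIcc a b, 0 < f u) :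
    IntervalIntegrable (fun u => log (f u)) MeasureTheory.volume a b :=
  (hf.log fun u hu => (hpos u hu).ne').intervalIntegrable

lemma intervalIntegral_log_div {f g : ℝ → ℝ} {a b : ℝ}
    (hf : ContinuousOn f (uIcc a b)) (hg : ContinuousOn g (uIcc a b))
    (hfpos : ∀ u ∈ uIcc a b, 0 < f u) (hgpos : ∀ u ∈ uIcc a b, 0 < g u) :
    ∫ u in a..b, log (f u / g u) = (∫ u in a..b, log (f u)) - ∫ u in a..b, log (g u) := by
  rw [← intervalIntegral.integral_sub (intervalIntegrable_log_of_continuousOn hf hfpos)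
    (intervalIntegrable_log_of_continuousOn hg hgpos)]
  exact intervalIntegral.integral_congr fun u hu => log_div (hfpos u hu).ne' (hgpos u hu).ne'

lemma geometricAgingIntensity_pos {r : ℝ → ℝ} {t : ℝ} (hr : 0 < r t) :
    0 < geometricAgingIntensity r t :=
  div_pos hr (exp_pos _)

lemma log_geometricAgingIntensity {r : ℝ → ℝ} {t : ℝ} (hr : 0 < r t) :
    log (geometricAgingIntensity r t) = log (r t) - (1 / t) * ∫ u in (0 : ℝ)..t, log (r u) := by
  rw [geometricAgingIntensity, log_div hr.ne' (exp_ne_zero _), log_exp]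

lemma geometricAgingIntensity_le_iff {rX rY : ℝ → ℝ} {t : ℝ}
    (hXc : ContinuousOn rX (uIcc 0 t)) (hYc : ContinuousOn rY (uIcc 0 t))
    (hXpos : ∀ u ∈ uIcc 0 t, 0 < rX u) (hYpos : ∀ u ∈ uIcc 0 t, 0 < rY u) :
    geometricAgingIntensity rY t ≤ geometricAgingIntensity rX t ↔
      (1 / t) * ∫ u in (0 : ℝ)..t, log (rX u / rY u) ≤ log (rX t / rY t) := by
  have hX : 0 < rX t := hXpos t right_mem_uIcc
  have hY : 0 < rY t := hYpos t right_mem_uIcc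
  rw [← log_le_log_iff (geometricAgingIntensity_pos hY) (geometricAgingIntensity_pos hX),
    log_geometricAgingIntensity hX, log_geometricAgingIntensity hY,
    intervalIntegral_log_div hXc hYc hXpos hYpos, log_div hX.ne' hY.ne', mul_sub]
  constructor <;> intro h <;> linarith

lemma intervalIntegral_le_sub_mul_of_le_right {f : ℝ → ℝ} {a b : ℝ} (hab : a ≤ b)
    (hf : IntervalIntegrable f MeasureTheory.volume a b) (hle : ∀ u ∈ Ioo a b, f u ≤ f b) :
    ∫ u in a..b, f u ≤ (b - a) * f b := by
  calc ∫ u in a..b, f u ≤ ∫ _ in a..b, f b :=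
        intervalIntegral.integral_mono_on_of_le_Ioo hab hf intervalIntegrable_const hle
    _ = (b - a) * f b := by rw [intervalIntegral.integral_const, smul_eq_mul]

lemma average_le_of_monotoneOn_Ioi {f : ℝ → ℝ} {t : ℝ} (ht : 0 < t)
    (hf : IntervalIntegrable f MeasureTheory.volume 0 t) (hmono : MonotoneOn f (Ioi 0)) :
    (1 / t) * ∫ u in (0 : ℝ)..t, f u ≤ f t := by
  have hint : ∫ u in (0 : ℝ)..t, f u ≤ t * f t := by
    simpa using intervalIntegral_le_sub_mul_of_le_right ht.le hf
      fun u hu => hmono hu.1 (mem_Ioi.2 ht) hu.2.le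
  calc (1 / t) * ∫ u in (0 : ℝ)..t, f u ≤ (1 / t) * (t * f t) := by gcongr
    _ = f t := by field_simp

theorem GAI_order_characterization_and_AF_sufficient
    (rX rY : ℝ → ℝ)
    (hXc : ContinuousOn rX (Set.Ici 0)) (hYc : ContinuousOn rY (Set.Ici 0))
    (hXpos : ∀ u ∈ Set.Ici (0 : ℝ), 0 < rX u)
    (hYpos : ∀ u ∈ Set.Ici (0 : ℝ), 0 < rY u) :
    ((∀ t > (0:ℝ),
        rY t / Real.exp ((1 / t) * ∫ u in (0:ℝ)..t, Real.log (rY u)) ≤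
          rX t / Real.exp ((1 / t) * ∫ u in (0:ℝ)..t, Real.log (rX u))) ↔
      ∀ t > (0:ℝ),
        (1 / t) * ∫ u in (0:ℝ)..t, Real.log (rX u / rY u) ≤
          Real.log (rX t / rY t)) ∧
    (MonotoneOn (fun t => Real.log (rX t / rY t)) (Set.Ioi 0) →
      ∀ t > (0:ℝ),
        rY t / Real.exp ((1 / t) * ∫ u in (0:ℝ)..t, Real.log (rY u)) ≤
          rX t / Real.exp ((1 / t) * ∫ u in (0:ℝ)..t, Real.log (rX u))) := by
  have hsub {t : ℝ} (ht : 0 < t) : uIcc 0 t ⊆ Ici 0 := by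
    rw [uIcc_of_le ht.le]
    exact Icc_subset_Ici_self
  have hGAI_iff (t : ℝ) (ht : 0 < t) := geometricAgingIntensity_le_iff (hXc.mono (hsub ht))
    (hYc.mono (hsub ht)) (fun u hu => hXpos u (hsub ht hu)) (fun u hu => hYpos u (hsub ht hu))
  refine ⟨forall₂_congr hGAI_iff, fun hmono t ht => (hGAI_iff t ht).2 ?_⟩
  have hratio : ContinuousOn (fun u => rX u / rY u) (uIcc 0 t) :=
    (hXc.div hYc fun u hu => (hYpos u hu).ne').mono (hsub ht)
  exact average_le_of_monotoneOn_Ioi ht (intervalIntegrable_log_of_continuousOn hratio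
    fun u hu => div_pos (hXpos u (hsub ht hu)) (hYpos u (hsub ht hu))) hmono
end
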